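/- arXiv:2006.00320 — 9 statements merged into one kernel-verified Lean document; each statement's English description precedes it below -/
import Mathlib

section
/- Let S be a cancellative commutative semitopological semigroup with open shifts. Then there exists a topology τ on the group of fractions ⟨S⟩ of S such that (⟨S⟩, τ) is a semitopological group (all translations are continuous), the image ι(S) of S is an open subset of (⟨S⟩, τ), and the subspace topology that ι(S) inherits from (⟨S⟩, τ) makes ι: S → ι(S) a homeomorphism. -/
/-- Let `S` be a cancellative commutative semitopological semigroup with open
shifts, and let `G` (together with the injective hom `ι : S → G` such that every element of
`G` is of the form `ι a * (ι b)⁻¹`) be its group of fractions `⟨S⟩`. Then there exists a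
topology `τ` on `G` making it a semitopological group (all translations continuous), such
that `ι S` is `τ`-open and `ι` is a topological embedding of `S` onto `ι S`. -/
theorem exists_semitopological_group_topology_on_fraction_group
    {S : Type*} [CommSemigroup S] [IsCancelMul S] [TopologicalSpace S]
    (hc : ∀ a : S, Continuous fun s : S => a * s)
    (ho : ∀ a : S, IsOpenMap fun s : S => a * s)
    {G : Type*} [CommGroup G] (ι : S →ₙ* G)
    (hinj : Function.Injective ι)
    (hgen : ∀ g : G, ∃ a b : S, g = ι a * (ι b)⁻¹) :
    ∃ τ : TopologicalSpace G,
      (∀ g : G, @Continuous G G τ τ fun h : G => g * h) ∧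
      (∀ g : G, @Continuous G G τ τ fun h : G => h * g) ∧
      @IsOpen G τ (Set.range ι) ∧
      @Topology.IsEmbedding S G _ τ ι := by
  classical
  obtain ⟨c₀, d₀, -⟩ := hgen 1
  -- the topology: U open iff for every g : G, {s | g * ι s ∈ U} is open in S
  let τ : TopologicalSpace G :=
  { IsOpen := fun U => ∀ g : G, IsOpen {s : S | g * ι s ∈ U}
    isOpen_univ := fun g => by simp
    isOpen_inter := fun U V hU hV g => by
      have h : {s : S | g * ι s ∈ U ∩ V} = {s : S | g * ι s ∈ U} ∩ {s : S | g * ι s ∈ V} := rfl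
      rw [h]; exact (hU g).inter (hV g)
    isOpen_sUnion := fun 𝒮 h g => by
      have he : {s : S | g * ι s ∈ ⋃₀ 𝒮} = ⋃ U ∈ 𝒮, {s : S | g * ι s ∈ U} := by
        ext s; simp [Set.mem_sUnion]
      rw [he]
      exact isOpen_biUnion fun U hU => h U hU g }
  have τopen : ∀ U : Set G, (∀ g : G, IsOpen {s : S | g * ι s ∈ U}) → @IsOpen G τ U :=
    fun U h => h
  have τopen' : ∀ U : Set G, @IsOpen G τ U → ∀ g : G, IsOpen {s : S | g * ι s ∈ U} :=
    fun U h => h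
  -- key algebraic equivalence
  have key : ∀ a c b v s : S,
      (ι a * (ι c)⁻¹ * ι s = ι (b * v) * (ι b)⁻¹) ↔ a * s * b = b * v * c := by
    intro a c b v s
    have h1 : ι a * (ι c)⁻¹ * ι s = (ι a * ι s) / ι c := by
      rw [div_eq_mul_inv, mul_right_comm]
    rw [h1, ← div_eq_mul_inv, div_eq_div_iff_mul_eq_mul, ← map_mul, ← map_mul, ← map_mul,
      hinj.eq_iff]
  -- left translations are continuous
  have hleft : ∀ g : G, @Continuous G G τ τ fun h : G => g * h := by
    intro g
    rw [@continuous_def G G τ τ]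
    intro U hU
    refine τopen _ fun g' => ?_
    have h : {s : S | g' * ι s ∈ (fun h : G => g * h) ⁻¹' U} = {s : S | (g * g') * ι s ∈ U} := by
      ext s; simp [mul_assoc]
    rw [h]; exact τopen' U hU (g * g')
  -- continuity of ι
  have hcont : @Continuous S G _ τ ι := by
    rw [@continuous_def S G _ τ]
    intro U hU
    have h : ι ⁻¹' U = {s : S | (1 : G) * ι s ∈ U} := by ext s; simp
    rw [h]; exact τopen' U hU 1
  refine ⟨τ, hleft, ?_, ?_, ?_⟩
  · intro g
    have h : (fun h : G => h * g) = fun h : G => g * h := by funext h; rw [mul_comm]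
    rw [h]; exact hleft g
  · -- range ι is open
    refine τopen _ fun g => ?_
    obtain ⟨a, b, rfl⟩ := hgen g
    have h : {s : S | ι a * (ι b)⁻¹ * ι s ∈ Set.range ι} =
        (fun s : S => a * s) ⁻¹' Set.range (fun t : S => b * t) := by
      ext s
      simp only [Set.mem_setOf_eq, Set.mem_preimage, Set.mem_range]
      constructor
      · rintro ⟨t, ht⟩
        -- ι a * (ι b)⁻¹ * ι s = ι t  ⇒  a * s = b * t
        refine ⟨t, ?_⟩
        have h2 : ι (a * s) = ι (b * t) := by
          rw [map_mul, map_mul]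
          calc ι a * ι s = ι a * (ι b)⁻¹ * ι s * ι b := by
                rw [mul_right_comm (ι a) (ι b)⁻¹ (ι s), inv_mul_cancel_right]
            _ = ι t * ι b := by rw [ht]
            _ = ι b * ι t := mul_comm _ _
        exact (hinj h2).symm
      · rintro ⟨t, ht⟩
        refine ⟨t, ?_⟩
        have h2 : ι b * ι t = ι a * ι s := by rw [← map_mul, ← map_mul, ht]
        symm
        calc ι a * (ι b)⁻¹ * ι s = ι a * ι s * (ι b)⁻¹ := by
              rw [mul_right_comm (ι a) (ι b)⁻¹ (ι s)]
          _ = ι b * ι t * (ι b)⁻¹ := by rw [← h2]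
          _ = ι t * ι b * (ι b)⁻¹ := by rw [mul_comm (ι b) (ι t)]
          _ = ι t := mul_inv_cancel_right _ _
    rw [h]
    exact (hc a).isOpen_preimage _ (ho b).isOpen_range
  · refine ⟨⟨?_⟩, hinj⟩
    refine le_antisymm (continuous_iff_le_induced.1 hcont) ?_
    -- hard direction: every open V of S is ι ⁻¹' of a τ-open set
    intro V hV
    rw [isOpen_induced_iff]
    refine ⟨{g : G | ∃ b v, v ∈ V ∧ g = ι (b * v) * (ι b)⁻¹}, ?_, ?_⟩
    · refine τopen _ fun g => ?_
      obtain ⟨a, c, rfl⟩ := hgen g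
      have hset : {s : S |
            ι a * (ι c)⁻¹ * ι s ∈ {g : G | ∃ b v, v ∈ V ∧ g = ι (b * v) * (ι b)⁻¹}}
          = (fun s : S => c * (a * s)) ⁻¹' ((fun t : S => (c * c) * t) '' V) := by
        ext s
        simp only [Set.mem_setOf_eq, Set.mem_preimage, Set.mem_image]
        constructor
        · rintro ⟨b, v, hv, hbv⟩
          have h := (key a c b v s).1 hbv
          refine ⟨v, hv, ?_⟩
          -- a*s*b = b*v*c  ⇒  c*c*v = c*(a*s)
          have h2 : c * c * v * b = c * (a * s) * b := by
            calc c * c * v * b = (b * v * c) * c := by ac_rfl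
              _ = (a * s * b) * c := by rw [← h]
              _ = c * (a * s) * b := by ac_rfl
          exact mul_right_cancel h2
        · rintro ⟨v, hv, hvc⟩
          refine ⟨c, v, hv, (key a c c v s).2 ?_⟩
          calc a * s * c = c * (a * s) := by ac_rfl
            _ = c * c * v := hvc.symm
            _ = c * v * c := by ac_rfl
      rw [hset]
      exact ((hc c).comp (hc a)).isOpen_preimage _ ((ho (c * c)) V hV)
    · -- preimage is V
      ext s
      simp only [Set.mem_preimage, Set.mem_setOf_eq]
      constructor
      · rintro ⟨b, v, hv, hbv⟩
        have h1 : ι (s * b) = ι (b * v) := by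
          rw [map_mul, hbv, inv_mul_cancel_right]
        have h2 : s * b = v * b := by
          calc s * b = b * v := hinj h1
            _ = v * b := mul_comm _ _
        rwa [mul_right_cancel h2]
      · intro hs
        refine ⟨c₀, s, hs, ?_⟩
        rw [map_mul, mul_comm (ι c₀) (ι s), mul_inv_cancel_right]
end

section
/- Let S be a cancellative commutative semitopological semigroup with open shifts and let τ be the topology on the group of fractions ⟨S⟩ generated by the sets g·ι(x)⁻¹ι(V) for g ∈ ⟨S⟩, a fixed x ∈ S and V an open neighborhood of x in S (which makes (⟨S⟩, τ) a semitopological group containing S as an open subsemigroup). Then S is first countable if and only if (⟨S⟩, τ) is first countable. -/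
/-!
Write `j s = ι(x)⁻¹ ι(s)` (this is `centeredMap ι x`), so that `j x = 1` and the generating
sets are the translates `g · j(V)`. Because shifts of `S` are continuous and open, each
generating set contains a generating set centred at any of its points; so these sets form a
basis, the neighbourhood filter of `g` is the image of `𝓝 x` under `s ↦ g · j(s)`, and `j` is
an open embedding. The first fact carries countable bases from `S` to `⟨S⟩`, the second
carries them back.
-/

/-- The topology on the group of fractions `G = ⟨S⟩` generated by the sets
`g · ι(x)⁻¹ · ι(V)`, for `g ∈ G`, a fixed `x ∈ S`, and `V` an open neighborhood
of `x` in `S`. -/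
def fractionGroupTopology {S : Type*} [Mul S] [TopologicalSpace S] {G : Type*} [CommGroup G]
    (ι : S →ₙ* G) (x : S) : TopologicalSpace G :=
  TopologicalSpace.generateFrom
    {T : Set G | ∃ (g : G) (V : Set S), IsOpen V ∧ x ∈ V ∧
      T = (fun s : S => g * (ι x)⁻¹ * ι s) '' V}

open Topology Filter

section Algebra

variable {S : Type*} [Mul S] {G : Type*} [CommGroup G] (ι : S →ₙ* G) (x : S)

def centeredMap (s : S) : G := (ι x)⁻¹ * ι s

variable {ι x}

theorem centeredMap_self : centeredMap ι x x = 1 := inv_mul_cancel _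

theorem centeredMap_mul_centeredMap {u v w : S} (h : v * w = x * u) :
    centeredMap ι x v * centeredMap ι x w = centeredMap ι x u := by
  have h' : ι v * ι w = ι x * ι u := by rw [← map_mul, ← map_mul, h]
  simp only [centeredMap]
  rw [mul_mul_mul_comm, ← mul_inv, h', mul_inv, mul_assoc, inv_mul_cancel_left]

theorem centeredMap_injective (hinj : Function.Injective ι) :
    Function.Injective (centeredMap ι x) :=
  (mul_right_injective _).comp hinj

theorem mem_mul_centeredMap_image (g : G) {V : Set S} (hx : x ∈ V) :
    g ∈ (g * centeredMap ι x ·) '' V :=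
  ⟨x, hx, by simp only [centeredMap_self, mul_one]⟩

end Algebra

namespace fractionGroupTopology

variable {S : Type*} [CommSemigroup S] [TopologicalSpace S] {G : Type*} [CommGroup G]
  {ι : S →ₙ* G} {x : S}

theorem eq_generateFrom :
    fractionGroupTopology ι x = TopologicalSpace.generateFrom
      {T | ∃ (g : G) (V : Set S), IsOpen V ∧ x ∈ V ∧ T = (g * centeredMap ι x ·) '' V} := by
  simp only [fractionGroupTopology, centeredMap, mul_assoc]

theorem exists_image_subset_of_mem_image (hc : ∀ a : S, Continuous fun s : S => a * s)
    (ho : ∀ a : S, IsOpenMap fun s : S => a * s) {g a : G} {V : Set S} (hV : IsOpen V)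
    (ha : a ∈ (g * centeredMap ι x ·) '' V) :
    ∃ W, IsOpen W ∧ x ∈ W ∧ (a * centeredMap ι x ·) '' W ⊆ (g * centeredMap ι x ·) '' V := by
  obtain ⟨v, hv, rfl⟩ := ha
  refine ⟨(v * ·) ⁻¹' ((x * ·) '' V), (ho x V hV).preimage (hc v), ⟨v, hv, mul_comm x v⟩, ?_⟩
  rintro _ ⟨w, ⟨u, hu, hxu⟩, rfl⟩
  exact ⟨u, hu, by dsimp only; rw [mul_assoc, centeredMap_mul_centeredMap hxu.symm]⟩

theorem isTopologicalBasis (hc : ∀ a : S, Continuous fun s : S => a * s)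
    (ho : ∀ a : S, IsOpenMap fun s : S => a * s) :
    @TopologicalSpace.IsTopologicalBasis G (fractionGroupTopology ι x)
      {T | ∃ (g : G) (V : Set S), IsOpen V ∧ x ∈ V ∧ T = (g * centeredMap ι x ·) '' V} := by
  let _ := fractionGroupTopology ι x
  refine ⟨?_, ?_, eq_generateFrom⟩
  · rintro _ ⟨g₁, V₁, hV₁, -, rfl⟩ _ ⟨g₂, V₂, hV₂, -, rfl⟩ a ⟨ha₁, ha₂⟩
    obtain ⟨W₁, hW₁, hxW₁, hsub₁⟩ := exists_image_subset_of_mem_image hc ho hV₁ ha₁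
    obtain ⟨W₂, hW₂, hxW₂, hsub₂⟩ := exists_image_subset_of_mem_image hc ho hV₂ ha₂
    refine ⟨_, ⟨a, W₁ ∩ W₂, hW₁.inter hW₂, ⟨hxW₁, hxW₂⟩, rfl⟩,
      mem_mul_centeredMap_image a ⟨hxW₁, hxW₂⟩, fun b hb => ⟨?_, ?_⟩⟩
    · exact hsub₁ (Set.image_mono Set.inter_subset_left hb)
    · exact hsub₂ (Set.image_mono Set.inter_subset_right hb)
  · exact Set.eq_univ_of_forall fun g =>
      ⟨_, ⟨g, Set.univ, isOpen_univ, Set.mem_univ x, rfl⟩,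
        mem_mul_centeredMap_image g (Set.mem_univ x)⟩

theorem hasBasis_nhds (hc : ∀ a : S, Continuous fun s : S => a * s)
    (ho : ∀ a : S, IsOpenMap fun s : S => a * s) (g : G) :
    (@nhds G (fractionGroupTopology ι x) g).HasBasis (fun V : Set S => IsOpen V ∧ x ∈ V)
      ((g * centeredMap ι x ·) '' ·) := by
  let _ := fractionGroupTopology ι x
  have hB := isTopologicalBasis (ι := ι) (x := x) hc ho
  refine ⟨fun T => ⟨fun hT => ?_, fun ⟨V, ⟨hV, hxV⟩, hVT⟩ => ?_⟩⟩
  · obtain ⟨_, ⟨⟨g', V', hV', -, rfl⟩, hg⟩, hT⟩ := hB.nhds_hasBasis.mem_iff.mp hT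
    obtain ⟨W, hW, hxW, hWV'⟩ := exists_image_subset_of_mem_image hc ho hV' hg
    exact ⟨W, ⟨hW, hxW⟩, hWV'.trans hT⟩
  · exact mem_of_superset ((hB.isOpen ⟨g, V, hV, hxV, rfl⟩).mem_nhds
      (mem_mul_centeredMap_image g hxV)) hVT

theorem nhds_eq_map (hc : ∀ a : S, Continuous fun s : S => a * s)
    (ho : ∀ a : S, IsOpenMap fun s : S => a * s) (g : G) :
    @nhds G (fractionGroupTopology ι x) g = map (g * centeredMap ι x ·) (𝓝 x) :=
  (hasBasis_nhds hc ho g).eq_of_same_basis ((nhds_basis_opens x).map _ |>.to_hasBasis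
    (fun V hV => ⟨V, hV.symm, subset_rfl⟩) (fun V hV => ⟨V, hV.symm, subset_rfl⟩))

theorem isOpenEmbedding_centeredMap (hc : ∀ a : S, Continuous fun s : S => a * s)
    (ho : ∀ a : S, IsOpenMap fun s : S => a * s) (hinj : Function.Injective ι) :
    @IsOpenEmbedding S G _ (fractionGroupTopology ι x) (centeredMap ι x) := by
  let _ := fractionGroupTopology ι x
  refine .of_continuous_injective_isOpenMap ?_ (centeredMap_injective hinj) ?_
  · refine continuous_iff_continuousAt.2 fun s => (hasBasis_nhds hc ho _).tendsto_right_iff.2 ?_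
    rintro V ⟨hV, hxV⟩
    filter_upwards [((ho s V hV).preimage (hc x)).mem_nhds ⟨x, hxV, mul_comm s x⟩]
    rintro t ⟨v, hv, hsv⟩
    exact ⟨v, hv, centeredMap_mul_centeredMap hsv⟩
  · refine fun U hU => isOpen_iff_mem_nhds.2 ?_
    rintro _ ⟨s, hs, rfl⟩
    obtain ⟨W, hW, hxW, hWU⟩ :=
      exists_image_subset_of_mem_image (g := (1 : G)) hc ho hU ⟨s, hs, one_mul _⟩
    simp only [one_mul] at hWU
    exact mem_of_superset ((hasBasis_nhds hc ho _).mem_of_mem ⟨hW, hxW⟩) hWU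

end fractionGroupTopology

theorem firstCountable_iff_fractionGroup_firstCountable_general
    {S : Type*} [CommSemigroup S] [TopologicalSpace S]
    (hc : ∀ a : S, Continuous fun s : S => a * s)
    (ho : ∀ a : S, IsOpenMap fun s : S => a * s)
    {G : Type*} [CommGroup G] (ι : S →ₙ* G)
    (hinj : Function.Injective ι)
    (x : S) :
    FirstCountableTopology S ↔
      @FirstCountableTopology G (fractionGroupTopology ι x) := by
  let _ := fractionGroupTopology ι x
  constructor
  · intro _
    refine ⟨fun g => ?_⟩
    rw [fractionGroupTopology.nhds_eq_map hc ho g]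
    infer_instance
  · intro _
    exact (fractionGroupTopology.isOpenEmbedding_centeredMap hc ho hinj).isInducing
      |>.firstCountableTopology

/-- Let `S` be a cancellative commutative semitopological semigroup with open
shifts, `G` (with injective hom `ι` generating `G` as `ι(S)ι(S)⁻¹`) its group of fractions
and `τ` the topology on `G` generated by the sets `g·ι(x)⁻¹·ι(V)` for `g ∈ G`, a fixed
`x ∈ S` and `V` an open neighborhood of `x` in `S`. Then `S` is first countable iff
`(G, τ)` is first countable. -/
theorem firstCountable_iff_fractionGroup_firstCountable
    {S : Type*} [CommSemigroup S] [IsCancelMul S] [TopologicalSpace S]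
    (hc : ∀ a : S, Continuous fun s : S => a * s)
    (ho : ∀ a : S, IsOpenMap fun s : S => a * s)
    {G : Type*} [CommGroup G] (ι : S →ₙ* G)
    (hinj : Function.Injective ι)
    (hgen : ∀ g : G, ∃ a b : S, g = ι a * (ι b)⁻¹)
    (x : S) :
    FirstCountableTopology S ↔
      @FirstCountableTopology G (fractionGroupTopology ι x) :=
  firstCountable_iff_fractionGroup_firstCountable_general hc ho ι hinj x
end

section
/- Let S be a cancellative commutative semitopological semigroup with open shifts and let τ be the topology on the group of fractions ⟨S⟩ generated by the sets g·ι(x)⁻¹ι(V) for g ∈ ⟨S⟩, a fixed x ∈ S and V an open neighborhood of x in S (which makes (⟨S⟩, τ) a semitopological group containing S as an open subsemigroup). Then (⟨S⟩, τ) is a paratopological group (multiplication on ⟨S⟩ is jointly continuous) if and only if multiplication on S is jointly continuous, i.e. S is a topological semigroup. -/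
section Aux

open TopologicalSpace Topology

variable {S : Type*} [CommSemigroup S] [IsCancelMul S] [TopologicalSpace S]
  {G : Type*} [CommGroup G] (ι : S →ₙ* G) (x : S)

private lemma phi_x (g : G) : g * (ι x)⁻¹ * ι x = g := by
  rw [mul_assoc, inv_mul_cancel, mul_one]

/-- Key lemma: for `v ∈ V` open, there is an open `W ∋ x` with
`ι v * (ι x)⁻¹ * ι W ⊆ ι V`. -/
private lemma keyA (hc : ∀ a : S, Continuous fun s : S => a * s)
    (ho : ∀ a : S, IsOpenMap fun s : S => a * s)
    {V : Set S} (hV : IsOpen V) {v : S} (hv : v ∈ V) :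
    ∃ W : Set S, IsOpen W ∧ x ∈ W ∧
      ∀ w ∈ W, ∃ v' ∈ V, ι v * (ι x)⁻¹ * ι w = ι v' := by
  refine ⟨(fun s => v * s) ⁻¹' ((fun s => x * s) '' V),
    (ho x V hV).preimage (hc v), ⟨v, hv, mul_comm x v⟩, ?_⟩
  intro w hw
  obtain ⟨v', hv', hvw⟩ := hw
  refine ⟨v', hv', ?_⟩
  have hvw' : x * v' = v * w := hvw
  have h1 : ι v * ι w = ι x * ι v' := by rw [← map_mul, ← map_mul, hvw']
  rw [mul_comm (ι v) (ι x)⁻¹, mul_assoc, h1, inv_mul_cancel_left]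

/-- The generating family is a topological basis for `fractionGroupTopology`. -/
private lemma basisB (hc : ∀ a : S, Continuous fun s : S => a * s)
    (ho : ∀ a : S, IsOpenMap fun s : S => a * s) :
    @IsTopologicalBasis G (fractionGroupTopology ι x)
      {T : Set G | ∃ (g : G) (V : Set S), IsOpen V ∧ x ∈ V ∧
        T = (fun s : S => g * (ι x)⁻¹ * ι s) '' V} := by
  letI : TopologicalSpace G := fractionGroupTopology ι x
  refine ⟨?_, ?_, rfl⟩
  · rintro t₁ ⟨g₁, V₁, hV₁, hx₁, rfl⟩ t₂ ⟨g₂, V₂, hV₂, hx₂, rfl⟩ g ⟨hg₁, hg₂⟩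
    obtain ⟨v₁, hv₁, e₁⟩ := hg₁
    obtain ⟨v₂, hv₂, e₂⟩ := hg₂
    obtain ⟨W₁, hW₁o, hW₁x, hW₁⟩ := keyA ι x hc ho hV₁ hv₁
    obtain ⟨W₂, hW₂o, hW₂x, hW₂⟩ := keyA ι x hc ho hV₂ hv₂
    refine ⟨(fun s : S => g * (ι x)⁻¹ * ι s) '' (W₁ ∩ W₂),
      ⟨g, W₁ ∩ W₂, hW₁o.inter hW₂o, ⟨hW₁x, hW₂x⟩, rfl⟩,
      ⟨x, ⟨hW₁x, hW₂x⟩, phi_x ι x g⟩, ?_⟩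
    rintro _ ⟨w, ⟨hw₁, hw₂⟩, rfl⟩
    constructor
    · obtain ⟨v', hv', e⟩ := hW₁ w hw₁
      refine ⟨v', hv', ?_⟩
      have e₁' : g₁ * (ι x)⁻¹ * ι v₁ = g := e₁
      show g₁ * (ι x)⁻¹ * ι v' = g * (ι x)⁻¹ * ι w
      rw [← e₁', ← e]
      simp only [mul_assoc]
    · obtain ⟨v', hv', e⟩ := hW₂ w hw₂
      refine ⟨v', hv', ?_⟩
      have e₂' : g₂ * (ι x)⁻¹ * ι v₂ = g := e₂
      show g₂ * (ι x)⁻¹ * ι v' = g * (ι x)⁻¹ * ι w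
      rw [← e₂', ← e]
      simp only [mul_assoc]
  · apply Set.eq_univ_of_forall
    intro g
    exact ⟨(fun s : S => g * (ι x)⁻¹ * ι s) '' Set.univ,
      ⟨g, Set.univ, isOpen_univ, trivial, rfl⟩, x, trivial, phi_x ι x g⟩

/-- Each map `s ↦ g * ι(x)⁻¹ * ι(s)` is open. -/
private lemma phiOpen (hc : ∀ a : S, Continuous fun s : S => a * s)
    (ho : ∀ a : S, IsOpenMap fun s : S => a * s)
    (g : G) {U : Set S} (hU : IsOpen U) :
    @IsOpen G (fractionGroupTopology ι x) ((fun s : S => g * (ι x)⁻¹ * ι s) '' U) := by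
  letI := fractionGroupTopology ι x
  rw [(basisB ι x hc ho).isOpen_iff]
  rintro _ ⟨u, hu, rfl⟩
  obtain ⟨W, hWo, hWx, hW⟩ := keyA ι x hc ho hU hu
  refine ⟨(fun s : S => (g * (ι x)⁻¹ * ι u) * (ι x)⁻¹ * ι s) '' W,
    ⟨g * (ι x)⁻¹ * ι u, W, hWo, hWx, rfl⟩, ⟨x, hWx, phi_x ι x _⟩, ?_⟩
  rintro _ ⟨w, hw, rfl⟩
  obtain ⟨v', hv', e'⟩ := hW w hw
  refine ⟨v', hv', ?_⟩
  show g * (ι x)⁻¹ * ι v' = g * (ι x)⁻¹ * ι u * (ι x)⁻¹ * ι w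
  rw [← e']
  simp only [mul_assoc]

/-- Each map `s ↦ g * ι(x)⁻¹ * ι(s)` is continuous. -/
private lemma phiCont (hc : ∀ a : S, Continuous fun s : S => a * s)
    (ho : ∀ a : S, IsOpenMap fun s : S => a * s)
    (hinj : Function.Injective ι)
    (hgen : ∀ g : G, ∃ a b : S, g = ι a * (ι b)⁻¹) (g : G) :
    @Continuous S G _ (fractionGroupTopology ι x) (fun s : S => g * (ι x)⁻¹ * ι s) := by
  apply continuous_generateFrom_iff.mpr
  rintro T ⟨k, V, hV, hxV, rfl⟩
  obtain ⟨a, b, hab⟩ := hgen (g⁻¹ * k)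
  have key : ∀ s v : S, (k * (ι x)⁻¹ * ι v = g * (ι x)⁻¹ * ι s) ↔ a * v = s * b := by
    intro s v
    rw [mul_right_comm k, mul_right_comm g, mul_left_inj, ← inv_mul_eq_iff_eq_mul,
      ← mul_assoc, hab, mul_right_comm, mul_inv_eq_iff_eq_mul, ← map_mul, ← map_mul,
      hinj.eq_iff]
  have hpre : (fun s : S => g * (ι x)⁻¹ * ι s) ⁻¹' ((fun s : S => k * (ι x)⁻¹ * ι s) '' V)
      = (fun s : S => s * b) ⁻¹' ((fun v : S => a * v) '' V) := by
    ext s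
    simp only [Set.mem_preimage, Set.mem_image]
    constructor
    · rintro ⟨v, hv, e⟩; exact ⟨v, hv, (key s v).1 e⟩
    · rintro ⟨v, hv, e⟩; exact ⟨v, hv, (key s v).2 e⟩
  rw [hpre]
  have hcb : Continuous fun s : S => s * b := by
    have : (fun s : S => s * b) = fun s : S => b * s := funext fun s => mul_comm s b
    rw [this]; exact hc b
  exact (ho a V hV).preimage hcb

end Aux

/-- Let `S` be a cancellative commutative semitopological semigroup with open
shifts, `G` its group of fractions, and `τ` the topology on `G` generated by the sets
`g·ι(x)⁻¹·ι(V)`. Then `(G, τ)` is a paratopological group (multiplication jointly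
continuous) iff multiplication on `S` is jointly continuous, i.e. `S` is a topological
semigroup. -/
theorem fractionGroup_paratopologicalGroup_iff_topologicalSemigroup
    {S : Type*} [CommSemigroup S] [IsCancelMul S] [TopologicalSpace S]
    (hc : ∀ a : S, Continuous fun s : S => a * s)
    (ho : ∀ a : S, IsOpenMap fun s : S => a * s)
    {G : Type*} [CommGroup G] (ι : S →ₙ* G)
    (hinj : Function.Injective ι)
    (hgen : ∀ g : G, ∃ a b : S, g = ι a * (ι b)⁻¹)
    (x : S) :
    @ContinuousMul G (fractionGroupTopology ι x) _ ↔ ContinuousMul S := by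
  constructor
  · -- paratopological group ⇒ topological semigroup
    intro hG
    letI : TopologicalSpace G := fractionGroupTopology ι x
    haveI : ContinuousMul G := hG
    have hψc : Continuous (fun s : S => (1 : G) * (ι x)⁻¹ * ι s) := phiCont ι x hc ho hinj hgen 1
    have hψinj : Function.Injective (fun s : S => (1 : G) * (ι x)⁻¹ * ι s) := by
      intro s t h
      exact hinj (mul_left_cancel h)
    have gid : ∀ p q r : G, r⁻¹ * (p * q) = r * (r⁻¹ * p) * (r⁻¹ * q) := by
      intro p q r
      rw [mul_inv_cancel_left, ← mul_assoc, mul_comm r⁻¹ p, mul_assoc]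
    refine ⟨?_⟩
    rw [continuous_def]
    intro U hU
    have hF : Continuous (fun p : S × S =>
        ι x * ((1 : G) * (ι x)⁻¹ * ι p.1) * ((1 : G) * (ι x)⁻¹ * ι p.2)) :=
      (continuous_const.mul (hψc.comp continuous_fst)).mul (hψc.comp continuous_snd)
    have heq : (fun p : S × S => p.1 * p.2) ⁻¹' U
        = (fun p : S × S => ι x * ((1 : G) * (ι x)⁻¹ * ι p.1) * ((1 : G) * (ι x)⁻¹ * ι p.2))
          ⁻¹' ((fun s : S => (1 : G) * (ι x)⁻¹ * ι s) '' U) := by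
      ext ⟨s, t⟩
      simp only [Set.mem_preimage, Set.mem_image]
      constructor
      · intro h
        refine ⟨s * t, h, ?_⟩
        simp only [one_mul, map_mul]
        exact gid (ι s) (ι t) (ι x)
      · rintro ⟨u, hu, e⟩
        have e2 : (1 : G) * (ι x)⁻¹ * ι (s * t) = (1 : G) * (ι x)⁻¹ * ι u := by
          rw [e]
          simp only [one_mul, map_mul]
          exact gid (ι s) (ι t) (ι x)
        rw [← hψinj e2] at hu
        exact hu
    rw [heq]
    exact hF.isOpen_preimage _ (phiOpen ι x hc ho 1 hU)
  · -- topological semigroup ⇒ paratopological group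
    intro hS
    letI : TopologicalSpace G := fractionGroupTopology ι x
    refine ⟨?_⟩
    apply continuous_generateFrom_iff.mpr
    rintro T ⟨k, V, hV, hxV, rfl⟩
    rw [isOpen_prod_iff]
    intro g h hgh
    obtain ⟨v, hv, e⟩ := hgh
    have e' : k * (ι x)⁻¹ * ι v = g * h := e
    obtain ⟨W, hWo, hWx, hW⟩ := keyA ι x hc ho hV hv
    have hxW : IsOpen ((fun s : S => x * s) '' W) := ho x W hWo
    have hpre : IsOpen ((fun p : S × S => p.1 * p.2) ⁻¹' ((fun s : S => x * s) '' W)) :=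
      continuous_mul.isOpen_preimage _ hxW
    rw [isOpen_prod_iff] at hpre
    obtain ⟨A, B, hA, hB, hxA, hxB, hAB⟩ := hpre x x ⟨x, hWx, rfl⟩
    refine ⟨(fun s : S => g * (ι x)⁻¹ * ι s) '' A, (fun s : S => h * (ι x)⁻¹ * ι s) '' B,
      phiOpen ι x hc ho g hA, phiOpen ι x hc ho h hB,
      ⟨x, hxA, phi_x ι x g⟩, ⟨x, hxB, phi_x ι x h⟩, ?_⟩
    rintro ⟨p, q⟩ ⟨⟨a, ha, rfl⟩, ⟨b, hb, rfl⟩⟩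
    have hab : a * b ∈ (fun s : S => x * s) '' W := hAB (Set.mk_mem_prod ha hb)
    obtain ⟨w, hw, hw'⟩ := hab
    have hw'' : x * w = a * b := hw'
    obtain ⟨v', hv', ev⟩ := hW w hw
    refine ⟨v', hv', ?_⟩
    show k * (ι x)⁻¹ * ι v' = (g * (ι x)⁻¹ * ι a) * (h * (ι x)⁻¹ * ι b)
    have hι : ι a * ι b = ι x * ι w := by rw [← map_mul, ← map_mul, hw'']
    rw [mul_mul_mul_comm (g * (ι x)⁻¹) (ι a) (h * (ι x)⁻¹) (ι b), hι,
      mul_mul_mul_comm g (ι x)⁻¹ h (ι x)⁻¹, ← e', ← ev]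
    simp only [mul_assoc, inv_mul_cancel_left]
end

section
/- Let S be a cancellative commutative semitopological semigroup with open shifts and let τ be the topology on the group of fractions ⟨S⟩ generated by the sets g·ι(x)⁻¹ι(V) for g ∈ ⟨S⟩, a fixed x ∈ S and V an open neighborhood of x in S (which makes (⟨S⟩, τ) a semitopological group containing S as an open subsemigroup). If S is Hausdorff, then (⟨S⟩, τ) is Hausdorff. -/
/-!
If `g ≠ h` and `g⁻¹ h = ι a · ι b⁻¹`, then `g · ι(x)⁻¹ · ι v = h · ι(x)⁻¹ · ι w` exactly when
`b v = a w`. In particular `b x ≠ a x`, and separating these two points of `S` by open sets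
`U₁ ∋ b x`, `U₂ ∋ a x` yields disjoint basic neighbourhoods of `g` and `h`, namely the translates
of `(b ·)⁻¹ U₁` and `(a ·)⁻¹ U₂`.
-/

open Topology

section

variable {S : Type*} [Mul S] {G : Type*} [CommGroup G] (ι : S →ₙ* G)

theorem translate_eq_translate_iff (hinj : Function.Injective ι) {g h : G} {a b : S}
    (hab : g⁻¹ * h = ι a * (ι b)⁻¹) (c : G) (v w : S) :
    g * c * ι v = h * c * ι w ↔ b * v = a * w := by
  obtain rfl : h = g * (ι a * (ι b)⁻¹) := eq_mul_of_inv_mul_eq hab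
  rw [← hinj.eq_iff, map_mul, map_mul, ← mul_right_inj (g * c * (ι b)⁻¹) (b := ι b * ι v)]
  congr! 1 <;> simp [mul_comm, mul_left_comm, mul_assoc]

theorem isOpen_fractionGroupTopology_image [TopologicalSpace S] (x : S) {V : Set S}
    (hV : IsOpen V) (hxV : x ∈ V) (g : G) :
    IsOpen[fractionGroupTopology ι x] ((fun s : S => g * (ι x)⁻¹ * ι s) '' V) :=
  TopologicalSpace.isOpen_generateFrom_of_mem ⟨g, V, hV, hxV, rfl⟩

end

theorem fractionGroup_t2Space_of_t2Space_general
    {S : Type*} [CommSemigroup S] [TopologicalSpace S]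
    (hc : ∀ a : S, Continuous fun s : S => a * s)
    {G : Type*} [CommGroup G] (ι : S →ₙ* G)
    (hinj : Function.Injective ι)
    (hgen : ∀ g : G, ∃ a b : S, g = ι a * (ι b)⁻¹)
    (x : S)
    (ht2 : T2Space S) :
    @T2Space G (fractionGroupTopology ι x) := by
  let _ := fractionGroupTopology ι x
  refine ⟨fun g h hgh => ?_⟩
  obtain ⟨a, b, hab⟩ := hgen (g⁻¹ * h)
  have key := translate_eq_translate_iff ι hinj hab (ι x)⁻¹
  have hne : b * x ≠ a * x := fun e => hgh (by simpa using (key x x).2 e)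
  obtain ⟨U₁, U₂, hU₁, hU₂, hxU₁, hxU₂, hU⟩ := t2_separation hne
  refine ⟨_, _, isOpen_fractionGroupTopology_image ι x (hU₁.preimage (hc b)) hxU₁ g,
    isOpen_fractionGroupTopology_image ι x (hU₂.preimage (hc a)) hxU₂ h,
    ⟨x, hxU₁, by simp⟩, ⟨x, hxU₂, by simp⟩, ?_⟩
  rw [Set.disjoint_left]
  rintro _ ⟨v, hv, rfl⟩ ⟨w, hw, hvw⟩
  have hbv : b * v ∈ U₂ := by simpa only [Set.mem_preimage, (key v w).1 hvw.symm] using hw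
  exact Set.disjoint_left.mp hU hv hbv

/-- Let `S` be a cancellative commutative semitopological semigroup with open
shifts, `G` its group of fractions, and `τ` the topology on `G` generated by the sets
`g·ι(x)⁻¹·ι(V)`. If `S` is Hausdorff then `(G, τ)` is Hausdorff. -/
theorem fractionGroup_t2Space_of_t2Space
    {S : Type*} [CommSemigroup S] [IsCancelMul S] [TopologicalSpace S]
    (hc : ∀ a : S, Continuous fun s : S => a * s)
    (ho : ∀ a : S, IsOpenMap fun s : S => a * s)
    {G : Type*} [CommGroup G] (ι : S →ₙ* G)
    (hinj : Function.Injective ι)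
    (hgen : ∀ g : G, ∃ a b : S, g = ι a * (ι b)⁻¹)
    (x : S)
    (ht2 : T2Space S) :
    @T2Space G (fractionGroupTopology ι x) :=
  fractionGroup_t2Space_of_t2Space_general hc ι hinj hgen x ht2
end

section
/- Let S be a cancellative commutative Hausdorff topological semigroup with open shifts, and let ⟨S⟩* denote the group of fractions ⟨S⟩ with the quotient topology induced by π: S × S → ⟨S⟩. Then ⟨S⟩* is a Hausdorff topological group and the quotient map π is open; moreover, if S has continuous division, then ι: S → ι(S) is a homeomorphism and ι(S) is open in ⟨S⟩*. -/
/-!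
Since `ι` is injective, `π (a, b) = π (u, v)` holds exactly when `(v, v) (a, b) = (b, b) (u, v)`,
so the `π`-saturation of `W ⊆ S × S` is the union over `s, t` of the preimages of `(t, t) W`
under multiplication by `(s, s)`. Open shifts make these open, so `π` is an open quotient map;
as `π` is multiplicative and turns the swap into inversion, `⟨S⟩*` is a topological group. Its
identity is closed because `π⁻¹ {1}` is the diagonal of the Hausdorff space `S`. Under continuous
division, for `(a, b) ∈ π⁻¹ (ι U)` the sets `U'`, `W` it supplies for `x = b` and `V = U` give a
neighbourhood `W ×ˢ U'` of `(a, b)` inside `π⁻¹ (ι U)`, so `ι` is an open map.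
-/

/-- The quotient topology on the group of fractions `G = ⟨S⟩`, i.e. the topology
coinduced from the product topology on `S × S` by the quotient map
`π (a, b) = ι a * (ι b)⁻¹`. -/
def fractionGroupQuotientTopology {S : Type*} [Mul S] [TopologicalSpace S]
    {G : Type*} [CommGroup G] (ι : S →ₙ* G) : TopologicalSpace G :=
  TopologicalSpace.coinduced (fun p : S × S => ι p.1 * (ι p.2)⁻¹) inferInstance

open Set Topology

def HasContinuousDivision (S : Type*) [Mul S] [TopologicalSpace S] : Prop :=
  ∀ x y : S, ∀ V : Set S, IsOpen V → y ∈ V →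
    ∃ U W : Set S, IsOpen U ∧ IsOpen W ∧ x ∈ U ∧ x * y ∈ W ∧
      ∀ u ∈ U, W ⊆ (fun v => u * v) '' V

section FractionMap

variable {S : Type*} [CommSemigroup S] {G : Type*} [CommGroup G] (ι : S →ₙ* G)

def fractionMap (p : S × S) : G := ι p.1 * (ι p.2)⁻¹

theorem fractionMap_mul (p q : S × S) :
    fractionMap ι (p * q) = fractionMap ι p * fractionMap ι q := by
  simp only [fractionMap, Prod.fst_mul, Prod.snd_mul, map_mul, mul_inv]
  ac_rfl

theorem fractionMap_swap (p : S × S) : fractionMap ι p.swap = (fractionMap ι p)⁻¹ := by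
  simp [fractionMap]

theorem fractionMap_diag_mul (s : S) (p : S × S) :
    fractionMap ι ((s, s) * p) = fractionMap ι p := by
  rw [fractionMap_mul, fractionMap, mul_inv_cancel, one_mul]

theorem fractionMap_mk_mul (s c : S) : fractionMap ι (s * c, c) = ι s := by
  simp [fractionMap, map_mul]

variable {ι}

theorem fractionMap_eq_iff (hinj : Function.Injective ι) {p q : S × S} :
    fractionMap ι p = fractionMap ι q ↔ p.1 * q.2 = q.1 * p.2 := by
  rw [fractionMap, fractionMap, ← div_eq_mul_inv, ← div_eq_mul_inv, div_eq_div_iff_mul_eq_mul,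
    ← map_mul, ← map_mul, hinj.eq_iff]

theorem fractionMap_eq_one_iff (hinj : Function.Injective ι) {p : S × S} :
    fractionMap ι p = 1 ↔ p.1 = p.2 := by
  rw [fractionMap, mul_inv_eq_one, hinj.eq_iff]

theorem fractionMap_eq_iff_exists_diag_mul (hinj : Function.Injective ι) {p q : S × S} :
    fractionMap ι p = fractionMap ι q ↔ ∃ s t : S, (s, s) * p = (t, t) * q := by
  constructor
  · intro h
    refine ⟨q.2, p.2, Prod.ext ?_ (mul_comm _ _)⟩
    simpa only [Prod.fst_mul, mul_comm q.2, mul_comm p.2] using (fractionMap_eq_iff hinj).mp h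
  · rintro ⟨s, t, h⟩
    rw [← fractionMap_diag_mul ι s, h, fractionMap_diag_mul]

theorem preimage_image_fractionMap (hinj : Function.Injective ι) (W : Set (S × S)) :
    fractionMap ι ⁻¹' (fractionMap ι '' W) =
      ⋃ s : S, ⋃ t : S, ((s, s) * ·) ⁻¹' (((t, t) * ·) '' W) := by
  ext p
  simp only [mem_preimage, mem_image, mem_iUnion]
  constructor
  · rintro ⟨q, hqW, hqp⟩
    obtain ⟨s, t, h⟩ := (fractionMap_eq_iff_exists_diag_mul hinj).mp hqp.symm
    exact ⟨s, t, q, hqW, h.symm⟩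
  · rintro ⟨s, t, q, hqW, h⟩
    exact ⟨q, hqW, (fractionMap_eq_iff_exists_diag_mul hinj).mpr ⟨t, s, h⟩⟩

theorem isQuotientMap_fractionMap_of_surjective [TopologicalSpace S]
    (hsurj : Function.Surjective (fractionMap ι)) :
    @IsQuotientMap _ _ _ (fractionGroupQuotientTopology ι) (fractionMap ι) :=
  let := fractionGroupQuotientTopology ι
  ⟨⟨rfl⟩, hsurj⟩

end FractionMap

section Topology

variable {S : Type*} [CommSemigroup S] [TopologicalSpace S]
  {G : Type*} [CommGroup G] [TopologicalSpace G] {ι : S →ₙ* G}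

theorem isOpenMap_fractionMap [ContinuousMul S] (ho : ∀ a : S, IsOpenMap fun s : S => a * s)
    (hinj : Function.Injective ι) (hq : IsQuotientMap (fractionMap ι)) :
    IsOpenMap (fractionMap ι) := by
  intro W hW
  rw [← hq.isCoinducing.isOpen_preimage, preimage_image_fractionMap hinj]
  refine isOpen_iUnion fun s => isOpen_iUnion fun t => ?_
  exact (continuous_const.mul continuous_id).isOpen_preimage _ (((ho t).prodMap (ho t)) W hW)

theorem isTopologicalGroup_of_isOpenQuotientMap_fractionMap [ContinuousMul S]
    (hq : IsOpenQuotientMap (fractionMap ι)) : IsTopologicalGroup G where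
  continuous_mul := by
    rw [(hq.prodMap hq).isQuotientMap.continuous_iff]
    have : (fun g : G × G => g.1 * g.2) ∘ Prod.map (fractionMap ι) (fractionMap ι) =
        fractionMap ι ∘ fun q : (S × S) × (S × S) => q.1 * q.2 := by
      funext q
      exact (fractionMap_mul ι q.1 q.2).symm
    rw [this]
    exact hq.continuous.comp continuous_mul
  continuous_inv := by
    rw [hq.isQuotientMap.continuous_iff]
    have : (fun g : G => g⁻¹) ∘ fractionMap ι = fractionMap ι ∘ Prod.swap := by
      funext p
      exact (fractionMap_swap ι p).symm
    rw [this]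
    exact hq.continuous.comp continuous_swap

theorem t2Space_of_isQuotientMap_fractionMap [T2Space S] [IsTopologicalGroup G]
    (hinj : Function.Injective ι) (hq : IsQuotientMap (fractionMap ι)) : T2Space G := by
  rw [IsTopologicalGroup.t2Space_iff_one_closed, ← hq.isCoinducing.isClosed_preimage]
  have : fractionMap ι ⁻¹' {1} = diagonal S := by
    ext p
    exact fractionMap_eq_one_iff hinj
  rw [this]
  exact isClosed_diagonal

theorem continuous_of_continuous_fractionMap [ContinuousMul S] [Nonempty S]
    (hπ : Continuous (fractionMap ι)) : Continuous ι := by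
  obtain ⟨c⟩ := ‹Nonempty S›
  have : (ι : S → G) = fractionMap ι ∘ fun s => (s * c, c) := by
    funext s
    exact (fractionMap_mk_mul ι s c).symm
  rw [this]
  exact hπ.comp (by fun_prop)

theorem isOpenMap_of_hasContinuousDivision (hinj : Function.Injective ι)
    (hq : IsQuotientMap (fractionMap ι)) (hdiv : HasContinuousDivision S) : IsOpenMap ι := by
  intro U hU
  rw [← hq.isCoinducing.isOpen_preimage, isOpen_iff_forall_mem_open]
  rintro ⟨a, b⟩ ⟨u, hu, hua⟩
  have hbu : b * u = a := by
    apply hinj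
    rw [map_mul, hua, fractionMap, mul_comm, inv_mul_cancel_right]
  obtain ⟨U', W, hU', hW, hbU', hbuW, hsub⟩ := hdiv b u U hU hu
  refine ⟨W ×ˢ U', ?_, hW.prod hU', ⟨hbu ▸ hbuW, hbU'⟩⟩
  rintro ⟨a', b'⟩ ⟨ha'W, hb'U'⟩
  obtain ⟨u', hu', hb'u'⟩ := hsub b' hb'U' ha'W
  refine ⟨u', hu', ?_⟩
  rw [fractionMap, eq_mul_inv_iff_mul_eq, ← map_mul, mul_comm]
  exact congrArg ι hb'u'

theorem isOpenEmbedding_of_hasContinuousDivision [ContinuousMul S] [Nonempty S]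
    (hinj : Function.Injective ι) (hq : IsQuotientMap (fractionMap ι))
    (hdiv : HasContinuousDivision S) : IsOpenEmbedding ι :=
  .of_continuous_injective_isOpenMap (continuous_of_continuous_fractionMap hq.continuous) hinj
    (isOpenMap_of_hasContinuousDivision hinj hq hdiv)

end Topology

theorem fractionGroupQuotient_t2_topologicalGroup_and_open_quotient_general
    {S : Type*} [CommSemigroup S] [TopologicalSpace S]
    [T2Space S] [ContinuousMul S]
    (ho : ∀ a : S, IsOpenMap fun s : S => a * s)
    {G : Type*} [CommGroup G] (ι : S →ₙ* G)
    (hinj : Function.Injective ι)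
    (hgen : ∀ g : G, ∃ a b : S, g = ι a * (ι b)⁻¹) :
    @IsTopologicalGroup G (fractionGroupQuotientTopology ι) _ ∧
    @T2Space G (fractionGroupQuotientTopology ι) ∧
    @IsOpenMap (S × S) G _ (fractionGroupQuotientTopology ι)
      (fun p : S × S => ι p.1 * (ι p.2)⁻¹) ∧
    ((∀ x y : S, ∀ V : Set S, IsOpen V → y ∈ V →
        ∃ U W : Set S, IsOpen U ∧ IsOpen W ∧ x ∈ U ∧ x * y ∈ W ∧
          ∀ u ∈ U, W ⊆ (fun v => u * v) '' V) →
      @Topology.IsEmbedding S G _ (fractionGroupQuotientTopology ι) ι ∧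
      @IsOpen G (fractionGroupQuotientTopology ι) (Set.range ι)) := by
  let := fractionGroupQuotientTopology ι
  have hq : IsQuotientMap (fractionMap ι) := isQuotientMap_fractionMap_of_surjective fun g =>
    let ⟨a, b, h⟩ := hgen g
    ⟨(a, b), h.symm⟩
  have hoq : IsOpenQuotientMap (fractionMap ι) :=
    ⟨hq.surjective, hq.continuous, isOpenMap_fractionMap ho hinj hq⟩
  have := isTopologicalGroup_of_isOpenQuotientMap_fractionMap hoq
  have : Nonempty S := let ⟨c, _, _⟩ := hgen 1; ⟨c⟩
  refine ⟨inferInstance, t2Space_of_isQuotientMap_fractionMap hinj hq, hoq.isOpenMap,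
    fun hdiv => ?_⟩
  have he := isOpenEmbedding_of_hasContinuousDivision hinj hq hdiv
  exact ⟨he.isEmbedding, he.isOpen_range⟩

/-- Let `S` be a cancellative commutative Hausdorff topological semigroup
with open shifts, and `⟨S⟩* = (G, τq)` its group of fractions with the quotient topology
induced by `π : S × S → G`. Then `⟨S⟩*` is a Hausdorff topological group and `π` is open;
moreover, if `S` has continuous division then `ι` is a homeomorphism onto `ι(S)` and
`ι(S)` is open in `⟨S⟩*`. -/
theorem fractionGroupQuotient_t2_topologicalGroup_and_open_quotient
    {S : Type*} [CommSemigroup S] [IsCancelMul S] [TopologicalSpace S]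
    [T2Space S] [ContinuousMul S]
    (ho : ∀ a : S, IsOpenMap fun s : S => a * s)
    {G : Type*} [CommGroup G] (ι : S →ₙ* G)
    (hinj : Function.Injective ι)
    (hgen : ∀ g : G, ∃ a b : S, g = ι a * (ι b)⁻¹) :
    @IsTopologicalGroup G (fractionGroupQuotientTopology ι) _ ∧
    @T2Space G (fractionGroupQuotientTopology ι) ∧
    @IsOpenMap (S × S) G _ (fractionGroupQuotientTopology ι)
      (fun p : S × S => ι p.1 * (ι p.2)⁻¹) ∧
    ((∀ x y : S, ∀ V : Set S, IsOpen V → y ∈ V →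
        ∃ U W : Set S, IsOpen U ∧ IsOpen W ∧ x ∈ U ∧ x * y ∈ W ∧
          ∀ u ∈ U, W ⊆ (fun v => u * v) '' V) →
      @Topology.IsEmbedding S G _ (fractionGroupQuotientTopology ι) ι ∧
      @IsOpen G (fractionGroupQuotientTopology ι) (Set.range ι)) :=
  fractionGroupQuotient_t2_topologicalGroup_and_open_quotient_general ho ι hinj hgen
end

section
/- Let S be a cancellative commutative Hausdorff feebly compact first-countable topological monoid with open shifts. Then S is a paratopological group; that is, every element of S is invertible (so S is a group under its monoid operation, with jointly continuous multiplication). -/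
open Filter Topology Set

section Aux

variable {S : Type*} [CommMonoid S] [IsCancelMul S] [TopologicalSpace S]
    [T2Space S] [FirstCountableTopology S] [ContinuousMul S]

/-- An infinite set of naturals contains arbitrarily large elements. -/
lemma aux_infinite_unbounded {s : Set ℕ} (h : s.Infinite) (n : ℕ) : ∃ m, m ∈ s ∧ n ≤ m := by
  by_contra hc
  push_neg at hc
  exact h ((Set.finite_Iio n).subset fun m hm => hc m hm)

/-- Key lemma: in a feebly compact first-countable Hausdorff topological monoid with
open shifts, every shift image `x * S` is closed. -/
lemma aux_closed_range_mul
    (hfc : ∀ F : Set (Set S), (∀ U ∈ F, IsOpen U ∧ U.Nonempty) →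
      LocallyFinite (fun U : F => (U : Set S)) → F.Finite)
    (ho : ∀ a : S, IsOpenMap fun s : S => a * s) (x : S) :
    IsClosed (Set.range fun s : S => x * s) := by
  refine isClosed_of_closure_subset fun a ha => ?_
  obtain ⟨B, hB⟩ := (𝓝 a).exists_antitone_basis
  obtain ⟨V0, hV0⟩ := (𝓝 (1 : S)).exists_antitone_basis
  set V : ℕ → Set S := fun i => interior (V0 i) with hVdef
  have hVopen : ∀ i, IsOpen (V i) := fun i => isOpen_interior
  have hV1 : ∀ i, (1 : S) ∈ V i := fun i =>
    mem_interior_iff_mem_nhds.2 (hV0.toHasBasis.mem_of_mem trivial)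
  have hVmem : ∀ i, V i ⊆ V0 i := fun i => interior_subset
  have hVanti : Antitone V := fun i j hij => interior_mono (hV0.antitone hij)
  have hc : ∀ i : ℕ, ∃ c, c ∈ B i ∧ ∃ u, x * u = c := fun i => by
    obtain ⟨c, hc1, hc2⟩ := mem_closure_iff_nhds.1 ha (B i) (hB.toHasBasis.mem_of_mem trivial)
    exact ⟨c, hc1, hc2⟩
  choose c hcB u hcu using hc
  set W : ℕ → Set S := fun i => (fun s => u i * s) '' V i with hWdef
  have hWopen : ∀ i, IsOpen (W i) := fun i => ho (u i) _ (hVopen i)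
  have hWne : ∀ i, (W i).Nonempty := fun i => ⟨u i * 1, ⟨1, hV1 i, rfl⟩⟩
  set F : Set (Set S) := Set.range W with hFdef
  have hFopen : ∀ U ∈ F, IsOpen U ∧ U.Nonempty := by
    rintro U ⟨i, rfl⟩; exact ⟨hWopen i, hWne i⟩
  have key : ∀ i (v : S), x * (u i * v) = c i * v := fun i v => by
    rw [← hcu i, mul_assoc]
  by_cases hF : F.Finite
  · -- finite case: some set repeats infinitely often; a fixed point z gives x * z = a.
    have hfin : Finite ↥F := hF.to_subtype
    obtain ⟨U, hU⟩ := Finite.exists_infinite_fiber fun i : ℕ => (⟨W i, ⟨i, rfl⟩⟩ : ↥F)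
    have hUne : (U : Set S).Nonempty := by
      obtain ⟨j, hj⟩ := U.2
      exact hj ▸ hWne j
    obtain ⟨z, hz⟩ := hUne
    have hsel : ∀ m : ℕ, ∃ i, m ≤ i ∧ ∃ v, v ∈ V i ∧ u i * v = z := by
      intro m
      obtain ⟨i, hiI, hmi⟩ := aux_infinite_unbounded (Set.infinite_coe_iff.mp hU) m
      have hWiU : W i = (U : Set S) := congrArg Subtype.val (Set.mem_singleton_iff.mp hiI)
      have : z ∈ W i := hWiU ▸ hz
      obtain ⟨v, hvV, hvz⟩ := this
      exact ⟨i, hmi, v, hvV, hvz⟩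
    choose i him v hvV hvz using hsel
    have hc_t : Tendsto (fun m => c (i m)) atTop (𝓝 a) :=
      hB.tendsto fun m => hB.antitone (him m) (hcB (i m))
    have hv_t : Tendsto v atTop (𝓝 (1 : S)) :=
      hV0.tendsto fun m => hVmem m (hVanti (him m) (hvV m))
    have hmul : Tendsto (fun m => c (i m) * v m) atTop (𝓝 a) := by
      have := hc_t.mul hv_t
      rwa [mul_one] at this
    have hconst : Tendsto (fun _ : ℕ => x * z) atTop (𝓝 a) := by
      refine hmul.congr fun m => ?_
      rw [← key (i m) (v m), hvz m]
    have : x * z = a := tendsto_nhds_unique tendsto_const_nhds hconst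
    exact ⟨z, this⟩
  · -- infinite case: a cluster point r of the family satisfies x * r = a.
    have hnl : ¬ LocallyFinite (fun U : ↥F => (U : Set S)) := fun hl => hF (hfc F hFopen hl)
    unfold LocallyFinite at hnl
    push_neg at hnl
    obtain ⟨r, hr⟩ := hnl
    have hri : ∀ N ∈ 𝓝 r, ∀ m : ℕ, ∃ j, m ≤ j ∧ (W j ∩ N).Nonempty := by
      intro N hN m
      have hinf : {j : ℕ | (W j ∩ N).Nonempty}.Infinite := by
        by_contra hfin
        rw [Set.not_infinite] at hfin
        apply hr N hN
        have hsub : {U : ↥F | ((U : Set S) ∩ N).Nonempty} ⊆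
            (fun j : ℕ => (⟨W j, ⟨j, rfl⟩⟩ : ↥F)) '' {j | (W j ∩ N).Nonempty} := by
          rintro ⟨U, hUF⟩ hUN
          obtain ⟨j, rfl⟩ := hUF
          exact ⟨j, hUN, rfl⟩
        exact (hfin.image _).subset hsub
      obtain ⟨j, hjI, hmj⟩ := aux_infinite_unbounded hinf m
      exact ⟨j, hmj, hjI⟩
    obtain ⟨D, hD⟩ := (𝓝 r).exists_antitone_basis
    have hsel : ∀ m : ℕ, ∃ j, m ≤ j ∧ ∃ v, v ∈ V j ∧ u j * v ∈ D m := by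
      intro m
      obtain ⟨j, hmj, y, hyW, hyD⟩ := hri (D m) (hD.toHasBasis.mem_of_mem trivial) m
      obtain ⟨v, hvV, rfl⟩ := hyW
      exact ⟨j, hmj, v, hvV, hyD⟩
    choose i him v hvV hvD using hsel
    have hc_t : Tendsto (fun m => c (i m)) atTop (𝓝 a) :=
      hB.tendsto fun m => hB.antitone (him m) (hcB (i m))
    have hv_t : Tendsto v atTop (𝓝 (1 : S)) :=
      hV0.tendsto fun m => hVmem m (hVanti (him m) (hvV m))
    have hy_t : Tendsto (fun m => u (i m) * v m) atTop (𝓝 r) :=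
      hD.tendsto fun m => hvD m
    have h1 : Tendsto (fun m => x * (u (i m) * v m)) atTop (𝓝 (x * r)) :=
      tendsto_const_nhds.mul hy_t
    have h2 : Tendsto (fun m => x * (u (i m) * v m)) atTop (𝓝 a) := by
      have hmul : Tendsto (fun m => c (i m) * v m) atTop (𝓝 a) := by
        have := hc_t.mul hv_t
        rwa [mul_one] at this
      refine hmul.congr fun m => ?_
      rw [← key (i m) (v m)]
    exact ⟨r, tendsto_nhds_unique h1 h2⟩

end Aux

/-- Let `S` be a cancellative commutative Hausdorff feebly compact
first-countable topological monoid with open shifts. Then `S` is a paratopological group: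
every element of `S` is invertible (multiplication is already jointly continuous). -/
theorem paratopologicalGroup_of_feeblyCompact_firstCountable_t2
    {S : Type*} [CommMonoid S] [IsCancelMul S] [TopologicalSpace S]
    [T2Space S] [FirstCountableTopology S] [ContinuousMul S]
    (hfc : ∀ F : Set (Set S), (∀ U ∈ F, IsOpen U ∧ U.Nonempty) →
      LocallyFinite (fun U : F => (U : Set S)) → F.Finite)
    (ho : ∀ a : S, IsOpenMap fun s : S => a * s) :
    ∀ x : S, ∃ y : S, x * y = 1 := by
  intro x
  by_contra hinv
  push_neg at hinv
  set A : ℕ → Set S := fun n => Set.range fun s : S => x ^ n * s with hAdef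
  have hAopen : ∀ n, IsOpen (A n) := fun n => (ho (x ^ n)).isOpen_range
  have hAclosed : ∀ n, IsClosed (A n) := fun n => aux_closed_range_mul hfc ho (x ^ n)
  have hAmono : ∀ {n m : ℕ}, n ≤ m → A m ⊆ A n := by
    rintro n m hnm y ⟨s, rfl⟩
    exact ⟨x ^ (m - n) * s, by
      show x ^ n * (x ^ (m - n) * s) = x ^ m * s
      rw [← mul_assoc, ← pow_add, Nat.add_sub_cancel' hnm]⟩
  set P : ℕ → Set S := fun n => A n \ A (n + 1) with hPdef
  have hPopen : ∀ n, IsOpen (P n) := fun n => (hAopen n).sdiff (hAclosed (n + 1))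
  have hxP : ∀ n, x ^ n ∈ P n := by
    intro n
    refine ⟨⟨1, mul_one _⟩, ?_⟩
    rintro ⟨s, hs⟩
    apply hinv s
    have hs' : x ^ (n + 1) * s = x ^ n := hs
    have h1 : x ^ n * (x * s) = x ^ n * 1 := by
      rw [← mul_assoc, ← pow_succ, hs', mul_one]
    exact mul_left_cancel h1
  have hPdisj : ∀ {n m : ℕ}, n < m → P n ∩ P m = ∅ := by
    intro n m hnm
    ext y
    simp only [Set.mem_inter_iff, Set.mem_empty_iff_false, iff_false, not_and]
    rintro ⟨_, hn⟩ ⟨hm, _⟩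
    exact absurd (hAmono hnm hm) hn
  have hPinj : Function.Injective P := by
    intro n m hPeq
    by_contra hne
    rcases lt_or_gt_of_ne hne with h | h
    · have hx2 : x ^ m ∈ P n ∩ P m := ⟨by rw [hPeq]; exact hxP m, hxP m⟩
      exact Set.eq_empty_iff_forall_notMem.1 (hPdisj h) _ hx2
    · have hx2 : x ^ n ∈ P m ∩ P n := ⟨by rw [← hPeq]; exact hxP n, hxP n⟩
      exact Set.eq_empty_iff_forall_notMem.1 (hPdisj h) _ hx2
  set F : Set (Set S) := Set.range P with hFdef
  have hFinf : F.Infinite := Set.infinite_range_of_injective hPinj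
  have hFopen : ∀ U ∈ F, IsOpen U ∧ U.Nonempty := by
    rintro U ⟨n, rfl⟩
    exact ⟨hPopen n, ⟨x ^ n, hxP n⟩⟩
  have hnl : ¬ LocallyFinite (fun U : ↥F => (U : Set S)) := fun hl => hFinf (hfc F hFopen hl)
  unfold LocallyFinite at hnl
  push_neg at hnl
  obtain ⟨z, hz⟩ := hnl
  have hzA : ∀ n, z ∈ A n := by
    intro n
    induction n with
    | zero => exact ⟨z, by show x ^ 0 * z = z; rw [pow_zero, one_mul]⟩
    | succ n ih =>
      by_contra hzn
      apply hz (P n) ((hPopen n).mem_nhds ⟨ih, hzn⟩)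
      refine Set.Finite.subset (Set.finite_singleton (⟨P n, ⟨n, rfl⟩⟩ : ↥F)) ?_
      rintro ⟨U, hUF⟩ hUN
      obtain ⟨m, rfl⟩ := hUF
      have hUN' : (P m ∩ P n).Nonempty := hUN
      rcases Nat.lt_trichotomy m n with h | h | h
      · exact absurd hUN' (by rw [hPdisj h]; exact Set.not_nonempty_empty)
      · subst h; rfl
      · exact absurd hUN' (by rw [Set.inter_comm, hPdisj h]; exact Set.not_nonempty_empty)
  have hzN : Set.range (fun s : S => z * s) ∈ 𝓝 z :=
    ((ho z).isOpen_range).mem_nhds ⟨1, mul_one z⟩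
  have hNE : {U : ↥F | ((U : Set S) ∩ Set.range (fun s : S => z * s)).Nonempty}.Nonempty :=
    Set.Infinite.nonempty (hz _ hzN)
  obtain ⟨⟨U, hUF⟩, hUN⟩ := hNE
  obtain ⟨n, rfl⟩ := hUF
  obtain ⟨y, hyP, s, rfl⟩ := hUN
  obtain ⟨w, hw⟩ := hzA (n + 1)
  have hw' : x ^ (n + 1) * w = z := hw
  exact hyP.2 ⟨w * s, by show x ^ (n + 1) * (w * s) = z * s; rw [← mul_assoc, hw']⟩
end

section
/- Every cancellative commutative Hausdorff locally compact σ-compact topological semigroup with open shifts has countable cellularity; that is, every pairwise disjoint family of nonempty open subsets of S is countable. -/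
/-!
A variant of Haar's construction. For compact `K` and nonempty open `V` let `(K : V)` be the
least number of translates `a V` covering some translate `K x`: without inverses one cannot
move `V` next to every point of `K`, so `K` is shifted instead, and open shifts make the index
finite. Along an ultrafilter of ever smaller open sets the ratios `(K : V) / (K₀ : V)` converge
to a content. It is additive on disjoint compacts because for small `V` the sets `K V` and
`L V` are disjoint (Hausdorff plus cancellativity), so no translate `a V` serves both, and it is
positive on compacts with nonempty interior. The resulting regular Borel measure is positive on
nonempty open sets and σ-finite by σ-compactness, so it admits only countably many disjoint
nonempty open sets.
-/

open Set Filter Topology TopologicalSpace MeasureTheory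
open scoped Pointwise NNReal

section ShiftIndex

variable {S : Type*}

def ShiftCoverable [Mul S] (K V : Set S) : Prop :=
  ∃ x, ∃ t : Finset S, K * {x} ⊆ (t : Set S) * V

-- `sInf ∅ = 0`: the index is `0` when `K` is not `ShiftCoverable` by `V`.
noncomputable def shiftIndex [Mul S] (K V : Set S) : ℕ :=
  sInf (Finset.card '' {t : Finset S | ∃ x, K * {x} ⊆ (t : Set S) * V})

variable {K L C Ω V : Set S}

theorem shiftIndex_le [Mul S] {x : S} {t : Finset S} (h : K * {x} ⊆ (t : Set S) * V) :
    shiftIndex K V ≤ t.card :=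
  Nat.sInf_le ⟨t, ⟨x, h⟩, rfl⟩

theorem ShiftCoverable.exists_card_eq_shiftIndex [Mul S] (h : ShiftCoverable K V) :
    ∃ x, ∃ t : Finset S, K * {x} ⊆ (t : Set S) * V ∧ t.card = shiftIndex K V := by
  obtain ⟨x, t, ht⟩ := h
  have hne : (Finset.card '' {t : Finset S | ∃ x, K * {x} ⊆ (t : Set S) * V}).Nonempty :=
    ⟨t.card, t, ⟨x, ht⟩, rfl⟩
  obtain ⟨t', ⟨x', ht'⟩, hcard⟩ := Nat.sInf_mem hne
  exact ⟨x', t', ht', hcard⟩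

theorem ShiftCoverable.mono [Mul S] (h : ShiftCoverable L V) (hKL : K ⊆ L) :
    ShiftCoverable K V :=
  let ⟨x, t, ht⟩ := h
  ⟨x, t, (mul_subset_mul_right hKL).trans ht⟩

theorem shiftIndex_mono [Mul S] (h : ShiftCoverable L V) (hKL : K ⊆ L) :
    shiftIndex K V ≤ shiftIndex L V := by
  obtain ⟨x, t, ht, hcard⟩ := h.exists_card_eq_shiftIndex
  exact hcard ▸ shiftIndex_le ((mul_subset_mul_right hKL).trans ht)

theorem ShiftCoverable.shiftIndex_pos [Mul S] (h : ShiftCoverable K V) (hK : K.Nonempty) :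
    0 < shiftIndex K V := by
  obtain ⟨x, t, ht, hcard⟩ := h.exists_card_eq_shiftIndex
  obtain ⟨k, hk⟩ := hK
  obtain ⟨a, ha, -⟩ := ht (mul_mem_mul hk rfl)
  exact hcard ▸ Finset.card_pos.2 ⟨a, ha⟩

theorem shiftIndex_le_mul [Semigroup S] (hKΩ : ShiftCoverable K Ω) (hCV : ShiftCoverable C V)
    (hΩC : Ω ⊆ C) : shiftIndex K V ≤ shiftIndex K Ω * shiftIndex C V := by
  classical
  obtain ⟨x, t, ht, ht_card⟩ := hKΩ.exists_card_eq_shiftIndex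
  obtain ⟨y, u, hu, hu_card⟩ := hCV.exists_card_eq_shiftIndex
  have hcover : K * {x * y} ⊆ ((t * u : Finset S) : Set S) * V :=
    calc K * {x * y} = K * {x} * {y} := by rw [mul_assoc, singleton_mul_singleton]
      _ ⊆ t * Ω * {y} := by gcongr
      _ ⊆ t * (C * {y}) := by rw [mul_assoc]; gcongr
      _ ⊆ t * (u * V) := by gcongr
      _ = ((t * u : Finset S) : Set S) * V := by rw [Finset.coe_mul, mul_assoc]
  rw [← ht_card, ← hu_card]
  exact (shiftIndex_le hcover).trans Finset.card_mul_le

theorem shiftIndex_union_le [CommSemigroup S] (hK : ShiftCoverable K V)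
    (hL : ShiftCoverable L V) : shiftIndex (K ∪ L) V ≤ shiftIndex K V + shiftIndex L V := by
  classical
  obtain ⟨x, t, ht, ht_card⟩ := hK.exists_card_eq_shiftIndex
  obtain ⟨y, u, hu, hu_card⟩ := hL.exists_card_eq_shiftIndex
  have hcover : (K ∪ L) * {x * y} ⊆ ((t * {y} ∪ u * {x} : Finset S) : Set S) * V :=
    calc (K ∪ L) * {x * y} = K * {x} * {y} ∪ L * {y} * {x} := by
          rw [union_mul, mul_assoc, mul_assoc, singleton_mul_singleton, singleton_mul_singleton,
            mul_comm y]
      _ ⊆ t * V * {y} ∪ u * V * {x} := by gcongr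
      _ = ((t * {y} ∪ u * {x} : Finset S) : Set S) * V := by
          simp only [Finset.coe_union, Finset.coe_mul, Finset.coe_singleton, union_mul,
            mul_right_comm _ V]
  rw [← ht_card, ← hu_card]
  calc shiftIndex (K ∪ L) V ≤ (t * {y} ∪ u * {x}).card := shiftIndex_le hcover
    _ ≤ (t * {y}).card + (u * {x}).card := Finset.card_union_le _ _
    _ ≤ t.card + u.card :=
        add_le_add (by simpa using Finset.card_mul_le (s := t) (t := {y}))
          (by simpa using Finset.card_mul_le (s := u) (t := {x}))

theorem shiftIndex_union_of_disjoint [CommSemigroup S] [IsRightCancelMul S]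
    (h : ShiftCoverable (K ∪ L) V) (hsep : Disjoint (K * V) (L * V)) :
    shiftIndex (K ∪ L) V = shiftIndex K V + shiftIndex L V := by
  classical
  refine le_antisymm (shiftIndex_union_le (h.mono subset_union_left)
    (h.mono subset_union_right)) ?_
  obtain ⟨x, t, ht, ht_card⟩ := h.exists_card_eq_shiftIndex
  let used (P : Set S) : Finset S := t.filter fun a => ∃ k ∈ P, ∃ v ∈ V, a * v = k * x
  have hcover {P : Set S} (hP : P ⊆ K ∪ L) : P * {x} ⊆ (used P : Set S) * V := by
    rintro _ ⟨k, hk, _, rfl, rfl⟩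
    obtain ⟨a, ha, v, hv, hav⟩ := ht (mul_mem_mul (hP hk) rfl)
    exact ⟨a, Finset.mem_filter.2 ⟨ha, k, hk, v, hv, hav⟩, v, hv, hav⟩
  -- a common translate `a * V` of `k * x` and `l * x` would give `k * v₂ = l * v₁`
  have hdisj : Disjoint (used K) (used L) := by
    refine Finset.disjoint_left.2 fun a haK haL => ?_
    obtain ⟨-, k, hk, v₁, hv₁, e₁⟩ := Finset.mem_filter.1 haK
    obtain ⟨-, l, hl, v₂, hv₂, e₂⟩ := Finset.mem_filter.1 haL
    refine disjoint_left.1 hsep (mul_mem_mul hk hv₂) ?_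
    have : k * v₂ * x = l * v₁ * x := by
      rw [mul_right_comm, ← e₁, mul_right_comm l, ← e₂, mul_right_comm]
    exact mul_right_cancel this ▸ mul_mem_mul hl hv₁
  rw [← ht_card]
  calc shiftIndex K V + shiftIndex L V ≤ (used K).card + (used L).card :=
        add_le_add (shiftIndex_le (hcover subset_union_left))
          (shiftIndex_le (hcover subset_union_right))
    _ = (used K ∪ used L).card := (Finset.card_union_of_disjoint hdisj).symm
    _ ≤ t.card := Finset.card_le_card (Finset.union_subset (Finset.filter_subset _ _)
        (Finset.filter_subset _ _))

end ShiftIndex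

section Topology

variable {S : Type*} [TopologicalSpace S]

theorem IsCompact.shiftCoverable [Mul S] [ContinuousMul S]
    (ho : ∀ a : S, IsOpenMap fun s : S => a * s) {K V : Set S} (hK : IsCompact K)
    (hV : IsOpen V) (hVne : V.Nonempty) : ShiftCoverable K V := by
  obtain ⟨v, hv⟩ := hVne
  have hKv : IsCompact (K * {v}) := by
    rw [mul_singleton]
    exact hK.image (continuous_mul_const v)
  obtain ⟨t, ht⟩ := hKv.elim_finite_subcover (fun a => (a * ·) '' V) (fun a => ho a V hV) <| by
    rintro _ ⟨k, -, w, hw, rfl⟩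
    exact mem_iUnion.2 ⟨k, v, hv, by rw [mem_singleton_iff.1 hw]⟩
  refine ⟨v, t, ht.trans_eq ?_⟩
  simpa using iUnion_mul_left_image (s := (t : Set S)) (t := V)

theorem IsCompact.exists_isOpen_mul_subset [Mul S] [ContinuousMul S] {K W : Set S}
    (hK : IsCompact K) (hW : IsOpen W) {p : S} (h : K * {p} ⊆ W) :
    ∃ V, IsOpen V ∧ p ∈ V ∧ K * V ⊆ W := by
  obtain ⟨u, v, -, hv, hKu, hpv, huv⟩ := generalized_tube_lemma hK isCompact_singleton
    (hW.preimage continuous_mul) (by rintro ⟨k, q⟩ ⟨hk, rfl⟩; exact h (mul_mem_mul hk rfl))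
  exact ⟨v, hv, hpv rfl, mul_subset_iff.2 fun k hk q hq => huv (mk_mem_prod (hKu hk) hq)⟩

theorem IsCompact.exists_isOpen_disjoint_mul [Mul S] [IsRightCancelMul S] [ContinuousMul S]
    [T2Space S] {K L : Set S} (hK : IsCompact K) (hL : IsCompact L) (hKL : Disjoint K L)
    (p : S) : ∃ V, IsOpen V ∧ p ∈ V ∧ Disjoint (K * V) (L * V) := by
  have hcpt {P : Set S} (hP : IsCompact P) : IsCompact (P * {p}) := by
    rw [mul_singleton]
    exact hP.image (continuous_mul_const p)
  have hdisj : Disjoint (K * {p}) (L * {p}) := by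
    rw [mul_singleton, mul_singleton]
    exact (disjoint_image_iff (mul_left_injective p)).2 hKL
  obtain ⟨W₁, W₂, hW₁, hW₂, hKW, hLW, hW⟩ :=
    SeparatedNhds.of_isCompact_isCompact (hcpt hK) (hcpt hL) hdisj
  obtain ⟨V₁, hV₁, hpV₁, hKV₁⟩ := hK.exists_isOpen_mul_subset hW₁ hKW
  obtain ⟨V₂, hV₂, hpV₂, hLV₂⟩ := hL.exists_isOpen_mul_subset hW₂ hLW
  exact ⟨V₁ ∩ V₂, hV₁.inter hV₂, ⟨hpV₁, hpV₂⟩,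
    hW.mono ((mul_subset_mul_left inter_subset_left).trans hKV₁)
      ((mul_subset_mul_left inter_subset_right).trans hLV₂)⟩

end Topology

section Shrinking

variable {S : Type*} [TopologicalSpace S]

-- Plays the role of `V` shrinking to the identity in Haar's construction.
def IsShrinking [Mul S] (𝓤 : Filter (Set S)) : Prop :=
  ∀ B : Set S, IsOpen B → B.Nonempty → ∀ᶠ V in 𝓤, IsOpen V ∧ V.Nonempty ∧ ∃ a : S, V ⊆ {a} * B

theorem exists_ultrafilter_isShrinking [CommSemigroup S]
    (ho : ∀ a : S, IsOpenMap fun s : S => a * s) :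
    ∃ 𝓤 : Ultrafilter (Set S), IsShrinking (𝓤 : Filter (Set S)) := by
  let refinements (B : Set S) : Set (Set S) :=
    {V | IsOpen V ∧ V.Nonempty ∧ ∃ a : S, V ⊆ {a} * B}
  let Opens' := {B : Set S // IsOpen B ∧ B.Nonempty}
  have hopen (a : S) {B : Set S} (hB : IsOpen B) : IsOpen ({a} * B) := by
    rw [singleton_mul]
    exact ho a B hB
  have htrans {B B' : Set S} {a : S} (h : B' ⊆ {a} * B) : refinements B' ⊆ refinements B := by
    rintro V ⟨hV, hVne, c, hc⟩
    refine ⟨hV, hVne, c * a, hc.trans ?_⟩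
    rw [← singleton_mul_singleton, mul_assoc]
    exact mul_subset_mul_left h
  have hdir : Directed (· ≥ ·) fun B : Opens' => 𝓟 (refinements B.1) := by
    rintro ⟨B₁, hB₁, b₁, hb₁⟩ ⟨B₂, hB₂, b₂, hb₂⟩
    refine ⟨⟨({b₂} * B₁) ∩ ({b₁} * B₂), (hopen b₂ hB₁).inter (hopen b₁ hB₂), b₂ * b₁,
        mul_mem_mul rfl hb₁, mul_comm b₁ b₂ ▸ mul_mem_mul rfl hb₂⟩,
      principal_mono.2 (htrans inter_subset_left), principal_mono.2 (htrans inter_subset_right)⟩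
  have hne (B : Opens') : (𝓟 (refinements B.1)).NeBot := by
    obtain ⟨B, hB, b, hb⟩ := B
    exact principal_neBot_iff.2 ⟨{b} * B, hopen b hB, ⟨b * b, mul_mem_mul rfl hb⟩, b, subset_rfl⟩
  have := iInf_neBot_of_directed hdir hne
  exact ⟨Ultrafilter.of (⨅ B : Opens', 𝓟 (refinements B.1)), fun B hB hBne =>
    Ultrafilter.of_le _ (mem_iInf_of_mem ⟨B, hB, hBne⟩ (mem_principal_self _))⟩

variable {𝓤 : Filter (Set S)}

theorem IsShrinking.eventually_isOpen_nonempty [Mul S] [Nonempty S] (h𝓤 : IsShrinking 𝓤) :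
    ∀ᶠ V in 𝓤, IsOpen V ∧ V.Nonempty :=
  (h𝓤 univ isOpen_univ univ_nonempty).mono fun _ hV => ⟨hV.1, hV.2.1⟩

theorem IsShrinking.eventually_shiftCoverable [Mul S] [ContinuousMul S] [Nonempty S]
    (ho : ∀ a : S, IsOpenMap fun s : S => a * s) (h𝓤 : IsShrinking 𝓤) {K : Set S}
    (hK : IsCompact K) : ∀ᶠ V in 𝓤, ShiftCoverable K V :=
  h𝓤.eventually_isOpen_nonempty.mono fun _ hV => hK.shiftCoverable ho hV.1 hV.2

theorem IsShrinking.eventually_disjoint_mul [CommSemigroup S] [IsCancelMul S] [ContinuousMul S]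
    [T2Space S] [Nonempty S] (h𝓤 : IsShrinking 𝓤) {K L : Set S} (hK : IsCompact K)
    (hL : IsCompact L) (hKL : Disjoint K L) : ∀ᶠ V in 𝓤, Disjoint (K * V) (L * V) := by
  obtain ⟨B, hB, hpB, hKLB⟩ := hK.exists_isOpen_disjoint_mul hL hKL (Classical.arbitrary S)
  filter_upwards [h𝓤 B hB ⟨_, hpB⟩] with V hV
  obtain ⟨-, -, a, hVB⟩ := hV
  have hsub {P : Set S} : P * V ⊆ (a * ·) '' (P * B) := by
    rw [← singleton_mul, mul_left_comm]
    exact mul_subset_mul_left hVB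
  exact ((disjoint_image_iff (mul_right_injective a)).2 hKLB).mono hsub hsub

end Shrinking

section Content

variable {S : Type*}

noncomputable def shiftRatio [Mul S] (K₀ K V : Set S) : ℝ≥0 :=
  shiftIndex K V / shiftIndex K₀ V

variable {K₀ K L C Ω V : Set S}

theorem shiftRatio_mono [Mul S] (h : ShiftCoverable L V) (hKL : K ⊆ L) :
    shiftRatio K₀ K V ≤ shiftRatio K₀ L V := by
  unfold shiftRatio
  gcongr
  exact shiftIndex_mono h hKL

theorem shiftRatio_union_le [CommSemigroup S] (hK : ShiftCoverable K V)
    (hL : ShiftCoverable L V) :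
    shiftRatio K₀ (K ∪ L) V ≤ shiftRatio K₀ K V + shiftRatio K₀ L V := by
  rw [shiftRatio, shiftRatio, shiftRatio, ← add_div]
  gcongr
  exact_mod_cast shiftIndex_union_le hK hL

theorem shiftRatio_union_of_disjoint [CommSemigroup S] [IsRightCancelMul S]
    (h : ShiftCoverable (K ∪ L) V) (hsep : Disjoint (K * V) (L * V)) :
    shiftRatio K₀ (K ∪ L) V = shiftRatio K₀ K V + shiftRatio K₀ L V := by
  rw [shiftRatio, shiftRatio, shiftRatio, ← add_div, shiftIndex_union_of_disjoint h hsep,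
    Nat.cast_add]

theorem shiftRatio_le [Semigroup S] (hKΩ : ShiftCoverable K Ω) (hK₀V : ShiftCoverable K₀ V)
    (hΩK₀ : Ω ⊆ K₀) : shiftRatio K₀ K V ≤ shiftIndex K Ω :=
  div_le_of_le_mul₀ zero_le zero_le (by exact_mod_cast shiftIndex_le_mul hKΩ hK₀V hΩK₀)

theorem inv_shiftIndex_le_shiftRatio [Semigroup S] (hK₀Ω : ShiftCoverable K₀ Ω)
    (hCV : ShiftCoverable C V) (hΩC : Ω ⊆ C) (hK₀V : ShiftCoverable K₀ V) (hK₀ : K₀.Nonempty) :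
    (shiftIndex K₀ Ω : ℝ≥0)⁻¹ ≤ shiftRatio K₀ C V := by
  have hV : (0 : ℝ≥0) < shiftIndex K₀ V := by exact_mod_cast hK₀V.shiftIndex_pos hK₀
  have hΩ : (0 : ℝ≥0) < shiftIndex K₀ Ω := by exact_mod_cast hK₀Ω.shiftIndex_pos hK₀
  rw [shiftRatio, le_div_iff₀ hV, inv_mul_le_iff₀ hΩ]
  exact_mod_cast shiftIndex_le_mul hK₀Ω hCV hΩC

variable [TopologicalSpace S]

theorem tendsto_shiftRatio [Semigroup S] [ContinuousMul S]
    (ho : ∀ a : S, IsOpenMap fun s : S => a * s) {𝓤 : Ultrafilter (Set S)}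
    (h𝓤 : IsShrinking (𝓤 : Filter (Set S))) (hK₀ : IsCompact K₀)
    (hK₀' : (interior K₀).Nonempty) (hK : IsCompact K) :
    Tendsto (shiftRatio K₀ K) 𝓤 (𝓝 (limUnder (𝓤 : Filter (Set S)) (shiftRatio K₀ K))) := by
  have := hK₀'.to_type
  have hbdd : ∀ᶠ V in (𝓤 : Filter (Set S)),
      shiftRatio K₀ K V ∈ Icc 0 (shiftIndex K (interior K₀) : ℝ≥0) :=
    (h𝓤.eventually_shiftCoverable ho hK₀).mono fun V hV =>
      ⟨zero_le, shiftRatio_le (hK.shiftCoverable ho isOpen_interior hK₀') hV interior_subset⟩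
  obtain ⟨r, -, hr⟩ := isCompact_Icc.ultrafilter_le_nhds (𝓤.map (shiftRatio K₀ K))
    (by rw [Ultrafilter.coe_map, le_principal_iff]; exact hbdd)
  exact tendsto_nhds_limUnder ⟨r, by rwa [Ultrafilter.coe_map] at hr⟩

theorem exists_content_ne_zero [CommSemigroup S] [IsCancelMul S] [ContinuousMul S] [T2Space S]
    [WeaklyLocallyCompactSpace S] [Nonempty S] (ho : ∀ a : S, IsOpenMap fun s : S => a * s) :
    ∃ μ : Content S, ∀ K : Compacts S, (interior (K : Set S)).Nonempty → μ K ≠ 0 := by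
  obtain ⟨K₀, hK₀, hK₀'⟩ : ∃ K₀ : Set S, IsCompact K₀ ∧ (interior K₀).Nonempty :=
    let ⟨K₀, hK₀, hx⟩ := exists_compact_mem_nhds (Classical.arbitrary S)
    ⟨K₀, hK₀, _, mem_interior_iff_mem_nhds.2 hx⟩
  obtain ⟨𝓤, h𝓤⟩ := exists_ultrafilter_isShrinking ho
  have hlim (K : Compacts S) := tendsto_shiftRatio ho h𝓤 hK₀ hK₀' K.isCompact
  have hcov (K : Compacts S) := h𝓤.eventually_shiftCoverable ho K.isCompact
  refine ⟨{ toFun K := limUnder (𝓤 : Filter (Set S)) (shiftRatio K₀ K)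
            mono' K L hKL := le_of_tendsto_of_tendsto (hlim K) (hlim L) <|
              (hcov L).mono fun _ hV => shiftRatio_mono hV hKL
            sup_disjoint' K L hKL _ _ := tendsto_nhds_unique (hlim (K ⊔ L)) <|
              ((hlim K).add (hlim L)).congr' <|
              ((hcov (K ⊔ L)).and (h𝓤.eventually_disjoint_mul K.isCompact L.isCompact hKL)).mono
                fun _ hV => (shiftRatio_union_of_disjoint hV.1 hV.2).symm
            sup_le' K L := le_of_tendsto_of_tendsto (hlim (K ⊔ L)) ((hlim K).add (hlim L)) <|
              ((hcov K).and (hcov L)).mono fun _ hV => shiftRatio_union_le hV.1 hV.2 },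
    fun C hC => ?_⟩
  rw [Content.mk_apply, ENNReal.coe_ne_zero, ← pos_iff_ne_zero]
  have hK₀C : ShiftCoverable K₀ (interior C) := hK₀.shiftCoverable ho isOpen_interior hC
  have hK₀ne : K₀.Nonempty := hK₀'.mono interior_subset
  refine (inv_pos.2 (Nat.cast_pos.2 (hK₀C.shiftIndex_pos hK₀ne))).trans_le
    (ge_of_tendsto (hlim C) ?_)
  filter_upwards [hcov C, h𝓤.eventually_shiftCoverable ho hK₀] with V hCV hK₀V
  exact inv_shiftIndex_le_shiftRatio hK₀C hCV interior_subset hK₀V hK₀ne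

end Content

theorem MeasureTheory.Content.isOpenPosMeasure_measure {G : Type*} [TopologicalSpace G]
    [LocallyCompactSpace G] [R1Space G] [MeasurableSpace G] [BorelSpace G] (μ : Content G)
    (hμ : ∀ K : Compacts G, (interior (K : Set G)).Nonempty → μ K ≠ 0) :
    μ.measure.IsOpenPosMeasure := by
  refine ⟨fun U hU ⟨x, hx⟩ => ?_⟩
  obtain ⟨K, hK, hxK, hKU⟩ := exists_compact_subset hU hx
  rw [μ.measure_apply hU.measurableSet, μ.outerMeasure_of_isOpen U hU, ← pos_iff_ne_zero]
  exact (pos_iff_ne_zero.2 (hμ ⟨K, hK⟩ ⟨x, hxK⟩)).trans_le (μ.le_innerContent ⟨K, hK⟩ ⟨U, hU⟩ hKU)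

theorem Set.PairwiseDisjoint.countable_of_isOpenPosMeasure {X ι : Type*} [TopologicalSpace X]
    [MeasurableSpace X] [OpensMeasurableSpace X] (μ : Measure X) [SFinite μ]
    [μ.IsOpenPosMeasure] {s : ι → Set X} {a : Set ι} (h : a.PairwiseDisjoint s)
    (ho : ∀ i ∈ a, IsOpen (s i)) (hne : ∀ i ∈ a, (s i).Nonempty) : a.Countable := by
  have hpos := Measure.countable_meas_pos_of_disjoint_iUnion (μ := μ) (As := fun i : a => s i)
    (fun i => (ho i i.2).measurableSet) (h.subtype _ _)
  rw [← countable_coe_iff, ← countable_univ_iff]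
  convert hpos
  exact (eq_univ_of_forall fun i : a => (ho i i.2).measure_pos μ (hne i i.2)).symm

/-- Every cancellative commutative Hausdorff locally compact σ-compact
topological semigroup with open shifts has countable cellularity: every pairwise disjoint
family of nonempty open subsets is countable. -/
theorem countable_cellularity_of_locallyCompact_sigmaCompact
    {S : Type*} [CommSemigroup S] [IsCancelMul S] [TopologicalSpace S]
    [T2Space S] [WeaklyLocallyCompactSpace S] [SigmaCompactSpace S] [ContinuousMul S]
    (ho : ∀ a : S, IsOpenMap fun s : S => a * s) :
    ∀ F : Set (Set S), (∀ U ∈ F, IsOpen U ∧ U.Nonempty) →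
      F.Pairwise Disjoint → F.Countable := by
  intro F hF hFd
  rcases isEmpty_or_nonempty S with _ | _
  · exact subsingleton_of_subsingleton.countable
  obtain ⟨μ, hμ⟩ := exists_content_ne_zero ho
  borelize S
  have := μ.isOpenPosMeasure_measure hμ
  exact Set.PairwiseDisjoint.countable_of_isOpenPosMeasure (s := id) μ.measure hFd
    (fun U hU => (hF U hU).1) (fun U hU => (hF U hU).2)
end

section
/- Every σ-compact locally compact cancellative commutative topological monoid with open shifts (no separation axioms assumed) has countable cellularity; that is, every pairwise disjoint family of nonempty open subsets is countable. -/
open Set Finset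

set_option linter.unusedSectionVars false

section AuxCellularity

variable {S : Type*} [CommMonoid S] [IsCancelMul S] [TopologicalSpace S] [ContinuousMul S]

/-- Any compact set is covered by finitely many open translates of an open set
containing `1`. -/
private lemma cell_cover_lemma (ho : ∀ a : S, IsOpenMap fun s : S => a * s)
    {C W : Set S} (hC : IsCompact C) (hW : IsOpen W) (h1 : (1 : S) ∈ W) :
    ∃ T : Finset S, C ⊆ ⋃ t ∈ T, (fun s => t * s) '' W := by
  apply hC.elim_finite_subcover (fun x : S => (fun s => x * s) '' W) (fun x => ho x W hW)
  intro y _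
  exact Set.mem_iUnion.mpr ⟨y, ⟨1, h1, mul_one y⟩⟩

/-- Packing bound: pairwise disjoint translates of `W` with centers in `K` are no more
numerous than any cover of `K` by translates of `W`. -/
private lemma cell_pack_card_le {K W : Set S} {T : Finset S}
    (hT : K ⊆ ⋃ t ∈ T, (fun s => t * s) '' W) {A : Finset S} (hAK : ↑A ⊆ K)
    (hAd : (↑A : Set S).Pairwise fun a b =>
      Disjoint ((fun s => a * s) '' W) ((fun s => b * s) '' W)) :
    A.card ≤ T.card := by
  classical
  have hchart : ∀ a : S, ∃ t w : S, a ∈ A → t ∈ T ∧ w ∈ W ∧ t * w = a := by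
    intro a
    by_cases ha : a ∈ A
    · have h2 := hT (hAK ha)
      rw [Set.mem_iUnion₂] at h2
      obtain ⟨t, ht, w, hw, hwa⟩ := h2
      exact ⟨t, w, fun _ => ⟨ht, hw, hwa⟩⟩
    · exact ⟨1, 1, fun h => absurd h ha⟩
  choose g w hg using hchart
  apply Finset.card_le_card_of_injOn g (fun a ha => (hg a ha).1)
  intro a ha b hb hab
  by_contra hne
  have hda := hAd ha hb hne
  obtain ⟨hgat, hwa, hga⟩ := hg a ha
  obtain ⟨hgbt, hwb, hgb⟩ := hg b hb
  have hkey : a * w b = b * w a := by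
    conv_lhs => rw [← hga, hab]
    conv_rhs => rw [← hgb]
    exact mul_right_comm _ _ _
  exact Set.disjoint_left.mp hda ⟨w b, hwb, rfl⟩ ⟨w a, hwa, hkey.symm⟩

/-- Main combinatorial bound: if each member of a disjoint finite family of open sets
(with the associated data) admits a cover of `K₀ * K₀` by at most `n` translates of its
private neighborhood of `1`, then the family has at most `n` members. -/
private lemma cell_main_bound (ho : ∀ a : S, IsOpenMap fun s : S => a * s)
    {K₀ : Set S} (hK₀c : IsCompact K₀) (h1 : (1 : S) ∈ interior K₀)
    (x : Set S → S) (Y : Set S → Set S) (T : Set S → Finset S) (n : ℕ)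
    (E : Finset (Set S))
    (hdisj : (↑E : Set (Set S)).Pairwise Disjoint)
    (hx : ∀ O ∈ E, x O ∈ interior K₀)
    (hYo : ∀ O ∈ E, IsOpen (Y O))
    (hY1 : ∀ O ∈ E, (1 : S) ∈ Y O)
    (hYV : ∀ O ∈ E, Y O ⊆ interior K₀)
    (hYmul : ∀ O ∈ E, ∀ p ∈ Y O, ∀ q ∈ Y O, x O * p * q ∈ O)
    (hT : ∀ O ∈ E, Set.image2 (· * ·) K₀ K₀ ⊆ ⋃ t ∈ T O, (fun s => t * s) '' (Y O))
    (hTn : ∀ O ∈ E, (T O).card ≤ n) :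
    E.card ≤ n := by
  classical
  set K₂ := Set.image2 (· * ·) K₀ K₀ with hK₂def
  have hK₂c : IsCompact K₂ := by
    rw [hK₂def, ← Set.image_prod]
    exact (hK₀c.prod hK₀c).image continuous_mul
  have h1K₀ : (1 : S) ∈ K₀ := interior_subset h1
  have h1K₂ : (1 : S) ∈ K₂ := ⟨1, h1K₀, 1, h1K₀, one_mul 1⟩
  have hVVK₂ : ∀ a ∈ interior K₀, ∀ b ∈ interior K₀, a * b ∈ K₂ := fun a ha b hb =>
    ⟨a, interior_subset ha, b, interior_subset hb, rfl⟩
  set W := interior K₀ ∩ ⋂ O ∈ (↑E : Set (Set S)), Y O with hWdef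
  have hWo : IsOpen W :=
    isOpen_interior.inter (E.finite_toSet.isOpen_biInter fun O hO => hYo O hO)
  have h1W : (1 : S) ∈ W := ⟨h1, Set.mem_biInter fun O hO => hY1 O hO⟩
  have hWY : ∀ O ∈ E, W ⊆ Y O := fun O hO =>
    Set.inter_subset_right.trans (Set.biInter_subset_of_mem (Finset.mem_coe.mpr hO))
  obtain ⟨T₂, hT₂⟩ := cell_cover_lemma ho hK₂c hWo h1W
  set pk : ℕ → Prop := fun p => ∃ A : Finset S, A.card = p ∧ ↑A ⊆ K₂ ∧
    (↑A : Set S).Pairwise fun a b =>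
      Disjoint ((fun s => a * s) '' W) ((fun s => b * s) '' W) with hpkdef
  have hbound : ∀ p, pk p → p ≤ T₂.card := by
    rintro p ⟨A, rfl, hAK, hAd⟩
    exact cell_pack_card_le hT₂ hAK hAd
  have hpk1 : pk 1 := by
    refine ⟨{1}, Finset.card_singleton 1, ?_, ?_⟩
    · intro a ha
      simp only [Finset.coe_singleton, Set.mem_singleton_iff] at ha
      subst ha; exact h1K₂
    · simp only [Finset.coe_singleton]
      exact Set.pairwise_singleton _ _
  set P := Nat.findGreatest pk T₂.card with hPdef
  have h1T₂ : 1 ≤ T₂.card := hbound 1 hpk1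
  have hP1 : 1 ≤ P := Nat.le_findGreatest h1T₂ hpk1
  have hPspec : pk P := Nat.findGreatest_spec h1T₂ hpk1
  have hPmax : ∀ p, pk p → p ≤ P := by
    intro p hp
    by_contra hlt
    push_neg at hlt
    exact Nat.findGreatest_is_greatest hlt (hbound p hp) hp
  obtain ⟨Z, hZcard, hZK₂, hZd⟩ := hPspec
  -- chart data for each point of the packing relative to each O
  have hchart : ∀ O : Set S, ∀ a : S, ∃ t v : S,
      O ∈ E → a ∈ Z → t ∈ T O ∧ v ∈ Y O ∧ t * v = a := by
    intro O a
    by_cases hO : O ∈ E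
    · by_cases ha : a ∈ Z
      · have h2 := hT O hO (hZK₂ ha)
        rw [Set.mem_iUnion₂] at h2
        obtain ⟨t, ht, v, hv, hva⟩ := h2
        exact ⟨t, v, fun _ _ => ⟨ht, hv, hva⟩⟩
      · exact ⟨1, 1, fun _ h => absurd h ha⟩
    · exact ⟨1, 1, fun h => absurd h hO⟩
  choose g v hg using hchart
  -- pigeonhole: some chart of O captures at least P/n of the packing
  have hfiber : ∀ O : Set S, ∃ tO : S,
      O ∈ E → P ≤ n * (Z.filter fun a => g O a = tO).card := by
    intro O
    by_cases hO : O ∈ E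
    · have hTne : (T O).Nonempty := by
        have h2 := hT O hO h1K₂
        rw [Set.mem_iUnion₂] at h2
        obtain ⟨t, ht, _⟩ := h2
        exact ⟨t, ht⟩
      obtain ⟨t₀, ht₀, hmax⟩ :=
        Finset.exists_max_image (T O) (fun t => (Z.filter fun a => g O a = t).card) hTne
      refine ⟨t₀, fun _ => ?_⟩
      have hsum : Z.card = ∑ t ∈ T O, (Z.filter fun a => g O a = t).card :=
        Finset.card_eq_sum_card_fiberwise fun a ha => (hg O a hO ha).1
      have hle : Z.card ≤ (T O).card * (Z.filter fun a => g O a = t₀).card := by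
        rw [hsum]
        have := Finset.sum_le_card_nsmul (T O)
          (fun t => (Z.filter fun a => g O a = t).card)
          ((Z.filter fun a => g O a = t₀).card) (fun t ht => hmax t ht)
        simpa [smul_eq_mul] using this
      calc P = Z.card := hZcard.symm
        _ ≤ (T O).card * (Z.filter fun a => g O a = t₀).card := hle
        _ ≤ n * (Z.filter fun a => g O a = t₀).card :=
            Nat.mul_le_mul_right _ (hTn O hO)
    · exact ⟨1, fun h => absurd h hO⟩
  choose tm htm using hfiber
  set A : Set S → Finset S := fun O => Z.filter fun a => g O a = tm O with hAdef
  set c : Set S → S → S := fun O a => x O * v O a with hcdef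
  have hAfact : ∀ O ∈ E, ∀ a ∈ A O, a ∈ Z ∧ v O a ∈ Y O ∧ tm O * v O a = a := by
    intro O hO a ha
    have haZ := (Finset.mem_filter.mp ha).1
    have hgeq := (Finset.mem_filter.mp ha).2
    obtain ⟨_, hv, hva⟩ := hg O a hO haZ
    exact ⟨haZ, hv, by rw [← hgeq]; exact hva⟩
  have htrsub : ∀ O ∈ E, ∀ a ∈ A O, ∀ w ∈ W, c O a * w ∈ O := by
    intro O hO a ha w hw
    obtain ⟨_, hv, _⟩ := hAfact O hO a ha
    exact hYmul O hO (v O a) hv w (hWY O hO hw)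
  have hcK₂ : ∀ O ∈ E, ∀ a ∈ A O, c O a ∈ K₂ := fun O hO a ha =>
    hVVK₂ _ (hx O hO) _ (hYV O hO (hAfact O hO a ha).2.1)
  have hcinj : ∀ O ∈ E, Set.InjOn (c O) ↑(A O) := by
    intro O hO a ha b hb hab
    have hva := (hAfact O hO a ha).2.2
    have hvb := (hAfact O hO b hb).2.2
    have hv : v O a = v O b := mul_left_cancel hab
    rw [← hva, ← hvb, hv]
  have hcmem : ∀ O ∈ E, ∀ a ∈ A O, c O a ∈ O := by
    intro O hO a ha
    have := htrsub O hO a ha 1 h1W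
    simpa using this
  have hdisjtr : ∀ O ∈ E, ∀ a ∈ A O, ∀ O' ∈ E, ∀ b ∈ A O', c O a ≠ c O' b →
      Disjoint ((fun s => c O a * s) '' W) ((fun s => c O' b * s) '' W) := by
    intro O hO a ha O' hO' b hb hne
    by_cases hOO : O = O'
    · subst hOO
      have hab : a ≠ b := by
        intro h; exact hne (by rw [h])
      rw [Set.disjoint_left]
      rintro p ⟨w1, hw1, hp1⟩ ⟨w2, hw2, hp2⟩
      have h3 : v O a * w1 = v O b * w2 := by
        apply mul_left_cancel (a := x O)
        rw [← mul_assoc, ← mul_assoc]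
        have e1 : x O * v O a * w1 = p := hp1
        have e2 : x O * v O b * w2 = p := hp2
        rw [e1, e2]
      have h4 : a * w1 = b * w2 := by
        rw [← (hAfact O hO a ha).2.2, ← (hAfact O hO b hb).2.2,
          mul_assoc, mul_assoc, h3]
      have hZab := hZd (Finset.mem_coe.mpr (hAfact O hO a ha).1)
        (Finset.mem_coe.mpr (hAfact O hO b hb).1) hab
      exact Set.disjoint_left.mp hZab ⟨w1, hw1, rfl⟩ ⟨w2, hw2, h4.symm⟩
    · have hOO' := hdisj (Finset.mem_coe.mpr hO) (Finset.mem_coe.mpr hO') hOO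
      rw [Set.disjoint_left]
      rintro p ⟨w1, hw1, hp1⟩ ⟨w2, hw2, hp2⟩
      have hp1O : p ∈ O := hp1 ▸ htrsub O hO a ha w1 hw1
      have hp2O : p ∈ O' := hp2 ▸ htrsub O' hO' b hb w2 hw2
      exact Set.disjoint_left.mp hOO' hp1O hp2O
  set Cs : Finset S := E.biUnion (fun O => (A O).image (c O)) with hCsdef
  have hCsmem : ∀ p : S, p ∈ Cs ↔ ∃ O ∈ E, ∃ a ∈ A O, c O a = p := by
    intro p
    simp [hCsdef, Finset.mem_biUnion, Finset.mem_image]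
  have hCsK : ↑Cs ⊆ K₂ := by
    intro p hp
    obtain ⟨O, hO, a, ha, rfl⟩ := (hCsmem p).mp hp
    exact hcK₂ O hO a ha
  have hCsd : (↑Cs : Set S).Pairwise fun a b =>
      Disjoint ((fun s => a * s) '' W) ((fun s => b * s) '' W) := by
    intro p hp q hq hpq
    obtain ⟨O, hO, a, ha, rfl⟩ := (hCsmem p).mp hp
    obtain ⟨O', hO', b, hb, rfl⟩ := (hCsmem q).mp hq
    exact hdisjtr O hO a ha O' hO' b hb hpq
  have hCsP : Cs.card ≤ P := hPmax _ ⟨Cs, rfl, hCsK, hCsd⟩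
  have himdisj : ∀ O₁ ∈ E, ∀ O₂ ∈ E, O₁ ≠ O₂ →
      Disjoint ((A O₁).image (c O₁)) ((A O₂).image (c O₂)) := by
    intro O₁ h₁ O₂ h₂ hne
    rw [Finset.disjoint_left]
    rintro p hp₁ hp₂
    obtain ⟨a, ha, rfl⟩ := Finset.mem_image.mp hp₁
    obtain ⟨b, hb, hcb⟩ := Finset.mem_image.mp hp₂
    have hpO₁ : c O₁ a ∈ O₁ := hcmem O₁ h₁ a ha
    have hpO₂ : c O₁ a ∈ O₂ := by rw [← hcb]; exact hcmem O₂ h₂ b hb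
    exact Set.disjoint_left.mp
      (hdisj (Finset.mem_coe.mpr h₁) (Finset.mem_coe.mpr h₂) hne) hpO₁ hpO₂
  have hCscard : Cs.card = ∑ O ∈ E, (A O).card := by
    rw [hCsdef, Finset.card_biUnion himdisj]
    exact Finset.sum_congr rfl fun O hO => Finset.card_image_of_injOn (hcinj O hO)
  have hfinal : E.card * P ≤ n * P := by
    calc E.card * P = ∑ _O ∈ E, P := by rw [Finset.sum_const, smul_eq_mul]
      _ ≤ ∑ O ∈ E, n * (A O).card := Finset.sum_le_sum fun O hO => htm O hO
      _ = n * ∑ O ∈ E, (A O).card := by rw [Finset.mul_sum]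
      _ = n * Cs.card := by rw [hCscard]
      _ ≤ n * P := Nat.mul_le_mul_left n hCsP
  exact Nat.le_of_mul_le_mul_right hfinal (lt_of_lt_of_le Nat.zero_lt_one hP1)

/-- Core case: a disjoint family of nonempty open subsets of the interior of a compact
neighborhood of `1` is countable. -/
private lemma cell_core (ho : ∀ a : S, IsOpenMap fun s : S => a * s)
    {K₀ : Set S} (hK₀c : IsCompact K₀) (h1 : (1 : S) ∈ interior K₀)
    (G : Set (Set S)) (hG : ∀ O ∈ G, IsOpen O ∧ O.Nonempty ∧ O ⊆ interior K₀)
    (hgd : G.Pairwise Disjoint) : G.Countable := by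
  classical
  set K₂ := Set.image2 (· * ·) K₀ K₀ with hK₂def
  have hK₂c : IsCompact K₂ := by
    rw [hK₂def, ← Set.image_prod]
    exact (hK₀c.prod hK₀c).image continuous_mul
  have hdata : ∀ O : Set S, ∃ (xO : S) (YO : Set S) (TO : Finset S), O ∈ G →
      (xO ∈ O ∧ xO ∈ interior K₀) ∧
      (IsOpen YO ∧ (1 : S) ∈ YO ∧ YO ⊆ interior K₀ ∧
        ∀ p ∈ YO, ∀ q ∈ YO, xO * p * q ∈ O) ∧
      (K₂ ⊆ ⋃ t ∈ TO, (fun s => t * s) '' YO) := by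
    intro O
    by_cases hO : O ∈ G
    · obtain ⟨hOopen, ⟨x₀, hx₀⟩, hOsub⟩ := hG O hO
      have hc : Continuous fun pq : S × S => x₀ * pq.1 * pq.2 :=
        ((continuous_const.mul continuous_fst).mul continuous_snd)
      have hpre : IsOpen ((fun pq : S × S => x₀ * pq.1 * pq.2) ⁻¹' O) := hOopen.preimage hc
      have hmem : ((1 : S), (1 : S)) ∈ (fun pq : S × S => x₀ * pq.1 * pq.2) ⁻¹' O := by
        simp only [Set.mem_preimage, mul_one]
        exact hx₀
      obtain ⟨Y₁, Y₂, hY₁, hY₂, h1Y₁, h1Y₂, hsub⟩ := isOpen_prod_iff.mp hpre 1 1 hmem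
      set Y₀ := Y₁ ∩ Y₂ ∩ interior K₀ with hY₀def
      have hY₀o : IsOpen Y₀ := (hY₁.inter hY₂).inter isOpen_interior
      have h1Y₀ : (1 : S) ∈ Y₀ := ⟨⟨h1Y₁, h1Y₂⟩, h1⟩
      obtain ⟨T₀, hT₀⟩ := cell_cover_lemma ho hK₂c hY₀o h1Y₀
      refine ⟨x₀, Y₀, T₀, fun _ => ⟨⟨hx₀, hOsub hx₀⟩, ⟨hY₀o, h1Y₀, Set.inter_subset_right,
        ?_⟩, hT₀⟩⟩
      intro p hp q hq
      have : (p, q) ∈ Y₁ ×ˢ Y₂ := ⟨hp.1.1, hq.1.2⟩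
      exact hsub this
    · exact ⟨1, ∅, ∅, fun h => absurd h hO⟩
  choose x Y T hdata' using hdata
  have hfin : ∀ n : ℕ, {O | O ∈ G ∧ (T O).card = n}.Finite := by
    intro n
    by_contra hinf
    have hinf' : {O | O ∈ G ∧ (T O).card = n}.Infinite := hinf
    obtain ⟨E, hEsub, hEcard⟩ := hinf'.exists_subset_card_eq (n + 1)
    have hmem : ∀ O ∈ E, O ∈ G ∧ (T O).card = n := fun O hO => hEsub hO
    have hle : E.card ≤ n := by
      apply cell_main_bound ho hK₀c h1 x Y T n E
      · exact hgd.mono fun O hO => (hmem O hO).1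
      · exact fun O hO => ((hdata' O (hmem O hO).1).1).2
      · exact fun O hO => ((hdata' O (hmem O hO).1).2.1).1
      · exact fun O hO => ((hdata' O (hmem O hO).1).2.1).2.1
      · exact fun O hO => ((hdata' O (hmem O hO).1).2.1).2.2.1
      · exact fun O hO => ((hdata' O (hmem O hO).1).2.1).2.2.2
      · exact fun O hO => ((hdata' O (hmem O hO).1).2.2)
      · exact fun O hO => le_of_eq (hmem O hO).2
    omega
  have hGsub : G ⊆ ⋃ n : ℕ, {O | O ∈ G ∧ (T O).card = n} := by
    intro O hO
    exact Set.mem_iUnion.mpr ⟨(T O).card, hO, rfl⟩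
  exact Set.Countable.mono hGsub
    (Set.countable_iUnion fun n => (hfin n).countable)

end AuxCellularity

/-- Every σ-compact locally compact cancellative commutative topological
monoid with open shifts (no separation axioms assumed) has countable cellularity: every
pairwise disjoint family of nonempty open subsets is countable. -/
theorem countable_cellularity_of_locallyCompact_sigmaCompact_monoid
    {S : Type*} [CommMonoid S] [IsCancelMul S] [TopologicalSpace S]
    [WeaklyLocallyCompactSpace S] [SigmaCompactSpace S] [ContinuousMul S]
    (ho : ∀ a : S, IsOpenMap fun s : S => a * s) :
    ∀ F : Set (Set S), (∀ U ∈ F, IsOpen U ∧ U.Nonempty) →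
      F.Pairwise Disjoint → F.Countable := by
  classical
  intro F hF hFd
  obtain ⟨K₀, hK₀c, hK₀n⟩ := exists_compact_mem_nhds (1 : S)
  have h1 : (1 : S) ∈ interior K₀ := mem_interior_iff_mem_nhds.mpr hK₀n
  have hcov : ∀ m : ℕ, ∃ T : Finset S,
      compactCovering S m ⊆ ⋃ t ∈ T, (fun s => t * s) '' interior K₀ :=
    fun m => cell_cover_lemma ho (isCompact_compactCovering S m) isOpen_interior h1
  choose Tm hTm using hcov
  set D : Set S := ⋃ m : ℕ, ↑(Tm m) with hDdef
  have hDc : D.Countable := Set.countable_iUnion fun m => (Tm m).countable_toSet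
  set Fd : S → Set (Set S) := fun d => {U | U ∈ F ∧ ∃ v ∈ interior K₀, d * v ∈ U}
    with hFddef
  have hFsub : F ⊆ ⋃ d ∈ D, Fd d := by
    intro U hU
    obtain ⟨y, hy⟩ := (hF U hU).2
    have hyuniv : y ∈ ⋃ m, compactCovering S m := by
      rw [iUnion_compactCovering]; trivial
    obtain ⟨m, hym⟩ := Set.mem_iUnion.mp hyuniv
    have := hTm m hym
    rw [Set.mem_iUnion₂] at this
    obtain ⟨t, ht, v, hv, hvy⟩ := this
    have htD : t ∈ D := Set.mem_iUnion.mpr ⟨m, Finset.mem_coe.mpr ht⟩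
    refine Set.mem_biUnion htD ⟨hU, v, hv, ?_⟩
    show t * v ∈ U
    rw [show t * v = y from hvy]
    exact hy
  have hFdc : ∀ d : S, (Fd d).Countable := by
    intro d
    set Φ : Set S → Set S := fun U => {w | w ∈ interior K₀ ∧ d * w ∈ U} with hΦdef
    have hΦinj : Set.InjOn Φ (Fd d) := by
      intro U₁ h₁ U₂ h₂ heq
      by_contra hne
      obtain ⟨hU₁F, v, hv, hdv⟩ := h₁
      have hvΦ : v ∈ Φ U₁ := ⟨hv, hdv⟩
      rw [heq] at hvΦ
      have hdis := hFd hU₁F h₂.1 hne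
      exact Set.disjoint_left.mp hdis hdv hvΦ.2
    have hGprop : ∀ O ∈ Φ '' (Fd d), IsOpen O ∧ O.Nonempty ∧ O ⊆ interior K₀ := by
      rintro O ⟨U, hU, rfl⟩
      refine ⟨?_, ?_, fun w hw => hw.1⟩
      · have : Φ U = interior K₀ ∩ (fun w => d * w) ⁻¹' U := rfl
        rw [this]
        exact isOpen_interior.inter ((hF U hU.1).1.preimage (continuous_mul_left d))
      · obtain ⟨_, v, hv, hdv⟩ := hU
        exact ⟨v, hv, hdv⟩
    have hGdisj : (Φ '' (Fd d)).Pairwise Disjoint := by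
      rintro O₁ ⟨U₁, h₁, rfl⟩ O₂ ⟨U₂, h₂, rfl⟩ hne
      have hUne : U₁ ≠ U₂ := by
        intro h; exact hne (by rw [h])
      have hdis := hFd h₁.1 h₂.1 hUne
      rw [Set.disjoint_left]
      rintro w ⟨hw₁, hw₂⟩ ⟨hw₃, hw₄⟩
      exact Set.disjoint_left.mp hdis hw₂ hw₄
    have hGc : (Φ '' (Fd d)).Countable :=
      cell_core ho hK₀c h1 (Φ '' (Fd d)) hGprop hGdisj
    exact Set.countable_of_injective_of_countable_image hΦinj hGc
  exact Set.Countable.mono hFsub (hDc.biUnion fun d _ => hFdc d)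
end

section
/- Every cancellative commutative feebly compact first-countable topological monoid with open shifts has countable cellularity; that is, every pairwise disjoint family of nonempty open subsets is countable. -/
open Topology Filter Pointwise

/-- Every cancellative commutative feebly compact first-countable
topological monoid with open shifts (no separation axioms assumed) has countable
cellularity: every pairwise disjoint family of nonempty open subsets is countable. -/
theorem countable_cellularity_of_feeblyCompact_firstCountable
    {S : Type*} [CommMonoid S] [IsCancelMul S] [TopologicalSpace S]
    [FirstCountableTopology S] [ContinuousMul S]
    (hfc : ∀ F : Set (Set S), (∀ U ∈ F, IsOpen U ∧ U.Nonempty) →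
      LocallyFinite (fun U : F => (U : Set S)) → F.Finite)
    (ho : ∀ a : S, IsOpenMap fun s : S => a * s) :
    ∀ F : Set (Set S), (∀ U ∈ F, IsOpen U ∧ U.Nonempty) →
      F.Pairwise Disjoint → F.Countable := by
  intro F hF hdisj
  obtain ⟨B, hB⟩ := (𝓝 (1:S)).exists_antitone_basis
  have hV : ∀ n : ℕ, ∃ Vn : Set S, IsOpen Vn ∧ (1:S) ∈ Vn ∧ Vn * Vn ⊆ B n := fun n =>
    exists_open_nhds_one_mul_subset (hB.mem n)
  choose V hVo hV1 hVm using hV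
  have hVsub : ∀ n, V n ⊆ B n := fun n v hv => by
    have := hVm n (Set.mul_mem_mul hv (hV1 n))
    simpa using this
  have hex : ∀ U ∈ F, ∃ x : S, ∃ n : ℕ, x ∈ U ∧ ∀ b ∈ B n, x * b ∈ U := by
    intro U hU
    obtain ⟨hUo, x, hx⟩ := hF U hU
    have hc : Continuous fun b : S => x * b := continuous_const.mul continuous_id
    have h1 : (fun b : S => x * b) ⁻¹' U ∈ 𝓝 (1:S) := by
      have := (hc.continuousAt (x := (1:S))).preimage_mem_nhds
        (hUo.mem_nhds (by simpa using hx))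
      exact this
    obtain ⟨n, -, hn⟩ := hB.toHasBasis.mem_iff.mp h1
    exact ⟨x, n, hx, fun b hb => hn hb⟩
  choose! xf nf hxf hnf using hex
  have key : ∀ n : ℕ, {U | U ∈ F ∧ nf U = n}.Finite := by
    intro n
    set A := {U | U ∈ F ∧ nf U = n} with hA
    set m : Set S → Set S := fun U => (fun s => xf U * s) '' V n with hm
    have hmne : ∀ U, (m U).Nonempty := fun U => ⟨xf U * 1, ⟨1, hV1 n, rfl⟩⟩
    have hmsub : ∀ U ∈ A, m U ⊆ U := by
      rintro U ⟨hUF, hUn⟩ s ⟨v, hv, rfl⟩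
      exact hnf U hUF v (hUn ▸ hVsub n hv)
    have hGfin : (m '' A).Finite := by
      apply hfc
      · rintro W ⟨U, hUA, rfl⟩
        exact ⟨ho (xf U) _ (hVo n), hmne U⟩
      · intro y
        refine ⟨(fun s => y * s) '' V n, (ho y _ (hVo n)).mem_nhds ⟨1, hV1 n, mul_one y⟩, ?_⟩
        apply Set.Subsingleton.finite
        rintro ⟨W1, hW1⟩ h1 ⟨W2, hW2⟩ h2
        obtain ⟨U1, hU1A, rfl⟩ := hW1
        obtain ⟨U2, hU2A, rfl⟩ := hW2
        simp only [Set.mem_setOf_eq] at h1 h2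
        obtain ⟨p1, ⟨w1, hw1, hp1⟩, v1, hv1, hq1⟩ := h1
        obtain ⟨p2, ⟨w2, hw2, hp2⟩, v2, hv2, hq2⟩ := h2
        -- p1 = xf U1 * w1 = y * v1 ; p2 = xf U2 * w2 = y * v2
        ext1
        by_contra hne
        have hUne : U1 ≠ U2 := by
          intro h; apply hne; simp only [hm]; rw [h]
        have e1 : xf U1 * (w1 * v2) ∈ U1 := by
          refine hnf U1 hU1A.1 _ (hU1A.2 ▸ hVm n (Set.mul_mem_mul hw1 hv2))
        have e2 : xf U2 * (w2 * v1) ∈ U2 := by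
          refine hnf U2 hU2A.1 _ (hU2A.2 ▸ hVm n (Set.mul_mem_mul hw2 hv1))
        have h12 : xf U1 * w1 = y * v1 := hp1.trans hq1.symm
        have h22 : xf U2 * w2 = y * v2 := hp2.trans hq2.symm
        have heq : xf U1 * (w1 * v2) = xf U2 * (w2 * v1) := by
          calc xf U1 * (w1 * v2) = (xf U1 * w1) * v2 := (mul_assoc _ _ _).symm
            _ = (y * v1) * v2 := by rw [h12]
            _ = (y * v2) * v1 := by rw [mul_assoc, mul_assoc, mul_comm v1 v2]
            _ = (xf U2 * w2) * v1 := by rw [h22]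
            _ = xf U2 * (w2 * v1) := mul_assoc _ _ _
        exact Set.disjoint_left.mp (hdisj hU1A.1 hU2A.1 hUne) e1 (heq ▸ e2)
    refine Set.Finite.of_finite_image hGfin ?_
    intro U1 hU1 U2 hU2 hmeq
    by_contra hne
    obtain ⟨p, hp⟩ := hmne U1
    exact Set.disjoint_left.mp (hdisj hU1.1 hU2.1 hne) (hmsub U1 hU1 hp)
      (hmsub U2 hU2 (hmeq ▸ hp))
  have : F ⊆ ⋃ n : ℕ, {U | U ∈ F ∧ nf U = n} := fun U hU =>
    Set.mem_iUnion.mpr ⟨nf U, hU, rfl⟩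
  exact (Set.countable_iUnion fun n => (key n).countable).mono this
end
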